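/- arXiv:2212.05017 — 11 statements merged into one kernel-verified Lean document; each statement's English description precedes it below -/
import Mathlib

section
/- Let X be a real vector space with seminorms ‖·‖ (the weak norm) and ‖·‖_s (the strong seminorm), let i : X → ℝ be a linear functional with |i(g)| ≤ ‖g‖ for all g ∈ X, and let 𝟙 ∈ X satisfy ‖𝟙‖ = 1. Let L : X → X be linear with i(L g) = i(g) for all g and ‖L g‖ ≤ N ‖g‖ for all g, where N ≥ 0. Let P : X → X be linear with ‖P g‖ ≤ ‖g‖ and ‖P g − g‖ ≤ K h ‖g‖_s for all g ∈ X, where K ≥ 0 and h > 0. Define Q g := P L P g + (i(g) − i(P L P g))·𝟙. Then for every f ∈ X, ‖Q f − L f‖ ≤ 2 K h (N ‖f‖_s + ‖L f‖_s). -/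
/-- The `i`-preserving discretized operator `Q g = P L P g + (i g - i (P L P g))·𝟙`
satisfies `‖Q f - L f‖ ≤ 2 K h (N ‖f‖_s + ‖L f‖_s)`. -/
theorem discretized_operator_close_to_L
    {X : Type*} [AddCommGroup X] [Module ℝ X]
    (nw ns : Seminorm ℝ X) (i : X →ₗ[ℝ] ℝ) (one : X)
    (hone : nw one = 1)
    (hi : ∀ g : X, |i g| ≤ nw g)
    (L P : X →ₗ[ℝ] X) (N K h : ℝ) (hN : 0 ≤ N) (hK : 0 ≤ K) (hh : 0 < h)
    (hiL : ∀ g : X, i (L g) = i g)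
    (hLbound : ∀ g : X, nw (L g) ≤ N * nw g)
    (hPw : ∀ g : X, nw (P g) ≤ nw g)
    (hPapprox : ∀ g : X, nw (P g - g) ≤ K * h * ns g)
    (Q : X → X)
    (hQ : ∀ g : X, Q g = P (L (P g)) + (i g - i (P (L (P g)))) • one) :
    ∀ f : X, nw (Q f - L f) ≤ 2 * K * h * (N * ns f + ns (L f)) := by
  intro f
  -- main estimate: nw (P L P f - L f) ≤ K h (N ns f + ns (L f))
  have hmain : nw (P (L (P f)) - L f) ≤ K * h * (N * ns f + ns (L f)) := by
    have hsplit : P (L (P f)) - L f = P (L (P f - f)) + (P (L f) - L f) := by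
      simp only [map_sub]; abel
    have h1 : nw (P (L (P f - f))) ≤ K * h * (N * ns f) := by
      calc nw (P (L (P f - f))) ≤ nw (L (P f - f)) := hPw _
        _ ≤ N * nw (P f - f) := hLbound _
        _ ≤ N * (K * h * ns f) := by
            exact mul_le_mul_of_nonneg_left (hPapprox f) hN
        _ = K * h * (N * ns f) := by ring
    have h2 : nw (P (L f) - L f) ≤ K * h * ns (L f) := hPapprox (L f)
    calc nw (P (L (P f)) - L f) = nw (P (L (P f - f)) + (P (L f) - L f)) := by rw [hsplit]
      _ ≤ nw (P (L (P f - f))) + nw (P (L f) - L f) := map_add_le_add nw _ _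
      _ ≤ K * h * (N * ns f) + K * h * ns (L f) := add_le_add h1 h2
      _ = K * h * (N * ns f + ns (L f)) := by ring
  -- the scalar correction equals i (L f - P L P f)
  have hscal : i f - i (P (L (P f))) = i (L f - P (L (P f))) := by
    rw [map_sub, hiL]
  have hscalb : |i f - i (P (L (P f)))| ≤ K * h * (N * ns f + ns (L f)) := by
    rw [hscal]
    calc |i (L f - P (L (P f)))| ≤ nw (L f - P (L (P f))) := hi _
      _ = nw (P (L (P f)) - L f) := by rw [← neg_sub]; exact map_neg_eq_map nw _
      _ ≤ K * h * (N * ns f + ns (L f)) := hmain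
  have hdecomp : Q f - L f = (P (L (P f)) - L f) + (i f - i (P (L (P f)))) • one := by
    rw [hQ]; abel
  calc nw (Q f - L f)
      = nw ((P (L (P f)) - L f) + (i f - i (P (L (P f)))) • one) := by rw [hdecomp]
    _ ≤ nw (P (L (P f)) - L f) + nw ((i f - i (P (L (P f)))) • one) :=
        map_add_le_add nw _ _
    _ = nw (P (L (P f)) - L f) + |i f - i (P (L (P f)))| * nw one := by
        rw [map_smul_eq_mul]; rfl
    _ ≤ K * h * (N * ns f + ns (L f)) + K * h * (N * ns f + ns (L f)) := by
        rw [hone, mul_one]; exact add_le_add hmain hscalb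
    _ = 2 * K * h * (N * ns f + ns (L f)) := by ring
end

section
/- Let X be a real vector space with seminorms ‖·‖ (the weak norm) and ‖·‖_s (the strong seminorm), let i : X → ℝ be a linear functional with |i(g)| ≤ ‖g‖ for all g ∈ X, and let 𝟙 ∈ X satisfy ‖𝟙‖ = 1. Let L : X → X be linear with i(L g) = i(g) for all g and ‖L g‖ ≤ N ‖g‖ for all g, where N ≥ 0. Let P : X → X be linear with ‖P g‖ ≤ ‖g‖ and ‖P g − g‖ ≤ K h ‖g‖_s for all g ∈ X, where K ≥ 0 and h > 0. Define Q g := P L P g + (i(g) − i(P L P g))·𝟙. If u ∈ X is a fixed point of L (L u = u), then ‖Q u − u‖ ≤ 2 K h (N + 1) ‖u‖_s. -/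
/-- If `u` is a fixed point of `L`, then the `i`-preserving discretized operator
`Q g = P L P g + (i g - i (P L P g))·𝟙` satisfies `‖Q u - u‖ ≤ 2 K h (N + 1) ‖u‖_s`. -/
theorem discretized_operator_fixed_point_residual
    {X : Type*} [AddCommGroup X] [Module ℝ X]
    (nw ns : Seminorm ℝ X) (i : X →ₗ[ℝ] ℝ) (one : X)
    (hone : nw one = 1)
    (hi : ∀ g : X, |i g| ≤ nw g)
    (L P : X →ₗ[ℝ] X) (N K h : ℝ) (hN : 0 ≤ N) (hK : 0 ≤ K) (hh : 0 < h)
    (hiL : ∀ g : X, i (L g) = i g)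
    (hLbound : ∀ g : X, nw (L g) ≤ N * nw g)
    (hPw : ∀ g : X, nw (P g) ≤ nw g)
    (hPapprox : ∀ g : X, nw (P g - g) ≤ K * h * ns g)
    (Q : X → X)
    (hQ : ∀ g : X, Q g = P (L (P g)) + (i g - i (P (L (P g)))) • one)
    (u : X) (hu : L u = u) :
    nw (Q u - u) ≤ 2 * K * h * (N + 1) * ns u := by
  set v := P (L (P u)) with hv
  have hdecomp : v - u = P (L (P u - u)) + (P u - u) := by
    simp [hv, map_sub, hu]
  have h1 : nw (P (L (P u - u))) ≤ N * (K * h * ns u) :=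
    le_trans (hPw _) (le_trans (hLbound _)
      (mul_le_mul_of_nonneg_left (hPapprox u) hN))
  have hvu : nw (v - u) ≤ (N + 1) * (K * h * ns u) := by
    rw [hdecomp]
    calc nw (P (L (P u - u)) + (P u - u))
        ≤ nw (P (L (P u - u))) + nw (P u - u) := map_add_le_add nw _ _
      _ ≤ N * (K * h * ns u) + K * h * ns u := add_le_add h1 (hPapprox u)
      _ = (N + 1) * (K * h * ns u) := by ring
  have hQu : Q u - u = (v - u) + (i u - i v) • one := by
    rw [hQ u]; abel
  have hicor : |i u - i v| ≤ nw (v - u) := by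
    have : i u - i v = i (u - v) := by simp [map_sub]
    rw [this]
    calc |i (u - v)| ≤ nw (u - v) := hi _
      _ = nw (v - u) := map_sub_rev nw u v
  calc nw (Q u - u) = nw ((v - u) + (i u - i v) • one) := by rw [hQu]
    _ ≤ nw (v - u) + nw ((i u - i v) • one) := map_add_le_add nw _ _
    _ = nw (v - u) + |i u - i v| * nw one := by rw [map_smul_eq_mul]; rfl
    _ ≤ (N + 1) * (K * h * ns u) + (N + 1) * (K * h * ns u) := by
        rw [hone, mul_one]
        exact add_le_add hvu (le_trans hicor hvu)
    _ = 2 * K * h * (N + 1) * ns u := by ring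
end

section
/- Let X be a real vector space with seminorms ‖·‖ (the weak norm) and ‖·‖_s (the strong seminorm), let i : X → ℝ be a linear functional with |i(g)| ≤ ‖g‖ for all g ∈ X, and let 𝟙 ∈ X satisfy ‖𝟙‖ = 1 and i(𝟙) = 1. Let L : X → X be linear with i(L g) = i(g) for all g and ‖L g‖ ≤ N ‖g‖ for all g, where N ≥ 0. Let P : X → X be linear with ‖P g‖ ≤ ‖g‖ and ‖P g − g‖ ≤ K h ‖g‖_s for all g ∈ X, where K ≥ 0 and h > 0, and define Q g := P L P g + (i(g) − i(P L P g))·𝟙. Let u ∈ X satisfy L u = u and i(u) = 1, and let u_h ∈ X satisfy i(u_h) = 1 and ‖Q u_h − u_h‖ ≤ ε. Let (C_k)_{k≥0} be nonnegative real numbers such that ‖Q^k v‖ ≤ C_k ‖v‖ for every v ∈ X with i(v) = 0 and every k ≥ 0, and suppose Σ_{k=0}^∞ C_k < ∞. Then ‖u − u_h‖ ≤ (Σ_{k=0}^∞ C_k) · (2 K h (1 + N) ‖u‖_s + ε). -/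
/-!
The discretized operator `Q` is linear, preserves `i`, and fixes the kernel-valued error
`e = u - u_h` up to the defect `d = e - Q e = (Q u_h - u_h) - (Q u - u)`. Telescoping gives
`e = Q^n e + ∑_{k<n} Q^k d`, and since `d` also lies in the kernel of `i`, the bounds `C_k`
give `‖e‖ ≤ C_n ‖e‖ + (∑ C_k) ‖d‖`; letting `n → ∞` kills the first term. The residual
`Q u - u` of the exact fixed point is controlled by the projection error `‖P u - u‖`.
-/

open Filter Finset

section Perturbation

variable {X : Type*} [AddCommGroup X]

theorem sub_iterate_eq_sum_iterate_sub {F : Type*} [FunLike F X X] [AddMonoidHomClass F X X]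
    (T : F) (e : X) (n : ℕ) :
    e - T^[n] e = ∑ k ∈ range n, T^[k] (e - T e) := by
  simp_rw [iterate_map_sub T, ← Function.iterate_succ_apply T]
  exact (sum_range_sub' (fun k => T^[k] e) n).symm

theorem seminorm_le_tsum_mul_seminorm_sub_apply [Module ℝ X] {F : Type*} [FunLike F X X]
    [AddMonoidHomClass F X X] (p : Seminorm ℝ X) (T : F) {C : ℕ → ℝ} (hC0 : ∀ k, 0 ≤ C k)
    (hC : Summable C) {e : X} (he : ∀ k, p (T^[k] e) ≤ C k * p e)
    (hd : ∀ k, p (T^[k] (e - T e)) ≤ C k * p (e - T e)) :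
    p e ≤ (∑' k, C k) * p (e - T e) := by
  have hbound : ∀ n, p e ≤ C n * p e + (∑' k, C k) * p (e - T e) := fun n => calc
    p e ≤ p (T^[n] e) + p (e - T^[n] e) := le_map_add_map_sub p _ _
    _ ≤ C n * p e + ∑ k ∈ range n, C k * p (e - T e) := by
      rw [sub_iterate_eq_sum_iterate_sub]
      gcongr
      · exact he n
      · exact (le_sum_of_subadditive p (map_zero p).le (map_add_le_add p) _ _).trans
          (sum_le_sum fun k _ => hd k)
    _ ≤ C n * p e + (∑' k, C k) * p (e - T e) := by
      rw [← sum_mul]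
      gcongr
      exact hC.sum_le_tsum _ fun k _ => hC0 k
  have hlim : Tendsto (fun n => C n * p e + (∑' k, C k) * p (e - T e)) atTop
      (nhds ((∑' k, C k) * p (e - T e))) := by
    simpa using (hC.tendsto_atTop_zero.mul_const (p e)).add_const _
  exact ge_of_tendsto' hlim hbound

end Perturbation

section CorrectedOperator

variable {X : Type*} [AddCommGroup X] [Module ℝ X] (i : X →ₗ[ℝ] ℝ) (one : X)

def correctedOperator (A : X →ₗ[ℝ] X) : X →ₗ[ℝ] X :=
  A + (i - i ∘ₗ A).smulRight one

theorem correctedOperator_apply (A : X →ₗ[ℝ] X) (g : X) :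
    correctedOperator i one A g = A g + (i g - i (A g)) • one := rfl

theorem apply_correctedOperator (hione : i one = 1) (A : X →ₗ[ℝ] X) (g : X) :
    i (correctedOperator i one A g) = i g := by
  simp [correctedOperator_apply, hione]

theorem correctedOperator_apply_sub_self (A : X →ₗ[ℝ] X) (g : X) :
    correctedOperator i one A g - g = (A g - g) - i (A g - g) • one := by
  rw [correctedOperator_apply, map_sub]
  module

theorem seminorm_sub_smul_le_two_mul (nw : Seminorm ℝ X) (hone : nw one = 1)
    (hi : ∀ g, |i g| ≤ nw g) (v : X) :
    nw (v - i v • one) ≤ 2 * nw v := calc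
  nw (v - i v • one) ≤ nw v + |i v| * nw one := by
    simpa [map_smul_eq_mul] using map_sub_le_add nw v (i v • one)
  _ ≤ 2 * nw v := by rw [hone]; linarith [hi v]

end CorrectedOperator

theorem seminorm_projection_sandwich_sub_le {X : Type*} [AddCommGroup X] [Module ℝ X]
    (nw : Seminorm ℝ X) (L P : X →ₗ[ℝ] X) {N δ : ℝ} (hN : 0 ≤ N)
    (hLbound : ∀ g, nw (L g) ≤ N * nw g) (hPw : ∀ g, nw (P g) ≤ nw g)
    {u : X} (hu : L u = u) (hPu : nw (P u - u) ≤ δ) :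
    nw (P (L (P u)) - u) ≤ (1 + N) * δ := calc
  nw (P (L (P u)) - u) = nw (P (L (P u - u)) + (P u - u)) := by
    rw [map_sub L (P u) u, hu, map_sub P, sub_add_sub_cancel]
  _ ≤ N * nw (P u - u) + nw (P u - u) :=
    (map_add_le_add nw _ _).trans (add_le_add_left ((hPw _).trans (hLbound _)) _)
  _ ≤ (1 + N) * δ := by nlinarith

theorem fixed_point_error_estimate_general
    {X : Type*} [AddCommGroup X] [Module ℝ X]
    (nw ns : Seminorm ℝ X) (i : X →ₗ[ℝ] ℝ) (one : X)
    (hone : nw one = 1) (hione : i one = 1)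
    (hi : ∀ g : X, |i g| ≤ nw g)
    (L P : X →ₗ[ℝ] X) (N K h : ℝ) (hN : 0 ≤ N)
    (hLbound : ∀ g : X, nw (L g) ≤ N * nw g)
    (hPw : ∀ g : X, nw (P g) ≤ nw g)
    (hPapprox : ∀ g : X, nw (P g - g) ≤ K * h * ns g)
    (Q : X → X)
    (hQ : ∀ g : X, Q g = P (L (P g)) + (i g - i (P (L (P g)))) • one)
    (u uh : X) (hu : L u = u) (hiu : i u = 1) (hiuh : i uh = 1)
    (ε : ℝ) (hres : nw (Q uh - uh) ≤ ε)
    (C : ℕ → ℝ) (hCpos : ∀ k, 0 ≤ C k)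
    (hC : ∀ v : X, i v = 0 → ∀ k : ℕ, nw (Q^[k] v) ≤ C k * nw v)
    (hsum : Summable C) :
    nw (u - uh) ≤ (∑' k, C k) * (2 * K * h * (1 + N) * ns u + ε) := by
  obtain rfl : Q = correctedOperator i one (P ∘ₗ L ∘ₗ P) := funext hQ
  set T := correctedOperator i one (P ∘ₗ L ∘ₗ P)
  have hresu : nw (T u - u) ≤ 2 * K * h * (1 + N) * ns u := by
    rw [correctedOperator_apply_sub_self]
    refine (seminorm_sub_smul_le_two_mul i one nw hone hi _).trans ?_
    have := seminorm_projection_sandwich_sub_le nw L P hN hLbound hPw hu (hPapprox u)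
    simp only [LinearMap.comp_apply]
    linarith
  have hdefect : (u - uh) - T (u - uh) = (T uh - uh) - (T u - u) := by
    rw [map_sub]; abel
  have hie : i (u - uh) = 0 := by rw [map_sub, hiu, hiuh, sub_self]
  have hid : i ((u - uh) - T (u - uh)) = 0 := by
    rw [map_sub, apply_correctedOperator i one hione, sub_self]
  calc nw (u - uh) ≤ (∑' k, C k) * nw ((u - uh) - T (u - uh)) :=
        seminorm_le_tsum_mul_seminorm_sub_apply nw T hCpos hsum (hC _ hie) (hC _ hid)
    _ ≤ (∑' k, C k) * (2 * K * h * (1 + N) * ns u + ε) := by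
      rw [hdefect]
      gcongr
      · exact tsum_nonneg hCpos
      · linarith [map_sub_le_add nw (T uh - uh) (T u - u)]

/-- Fixed point approximation error estimate (Theorem 3.1 version): if `u` is the
fixed point of `L` with `i u = 1`, `u_h` is an approximate fixed point of the
`i`-preserving discretized operator `Q` with `i u_h = 1` and residual at most `ε`,
and `C_k` bound the norms of the iterates of `Q` on the kernel of `i`, with
`Σ C_k < ∞`, then `‖u - u_h‖ ≤ (Σ C_k)(2 K h (1 + N) ‖u‖_s + ε)`. -/
theorem fixed_point_error_estimate
    {X : Type*} [AddCommGroup X] [Module ℝ X]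
    (nw ns : Seminorm ℝ X) (i : X →ₗ[ℝ] ℝ) (one : X)
    (hone : nw one = 1) (hione : i one = 1)
    (hi : ∀ g : X, |i g| ≤ nw g)
    (L P : X →ₗ[ℝ] X) (N K h : ℝ) (hN : 0 ≤ N) (hK : 0 ≤ K) (hh : 0 < h)
    (hiL : ∀ g : X, i (L g) = i g)
    (hLbound : ∀ g : X, nw (L g) ≤ N * nw g)
    (hPw : ∀ g : X, nw (P g) ≤ nw g)
    (hPapprox : ∀ g : X, nw (P g - g) ≤ K * h * ns g)
    (Q : X → X)
    (hQ : ∀ g : X, Q g = P (L (P g)) + (i g - i (P (L (P g)))) • one)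
    (u uh : X) (hu : L u = u) (hiu : i u = 1) (hiuh : i uh = 1)
    (ε : ℝ) (hres : nw (Q uh - uh) ≤ ε)
    (C : ℕ → ℝ) (hCpos : ∀ k, 0 ≤ C k)
    (hC : ∀ v : X, i v = 0 → ∀ k : ℕ, nw (Q^[k] v) ≤ C k * nw v)
    (hsum : Summable C) :
    nw (u - uh) ≤ (∑' k, C k) * (2 * K * h * (1 + N) * ns u + ε) :=
  fixed_point_error_estimate_general nw ns i one hone hione hi L P N K h hN hLbound hPw hPapprox Q
    hQ u uh hu hiu hiuh ε hres C hCpos hC hsum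
end

section
/- Let X be a real vector space with seminorms ‖·‖_s and |||·|||, let i : X → ℝ be linear, and let 𝟙 ∈ X satisfy ‖𝟙‖_s = 0. Let L : X → X be linear with i(L g) = i(g), ‖L g‖_s ≤ A ‖g‖_s + B |||g|||, and |||L g||| ≤ |||g||| for all g ∈ X, where A, B ≥ 0. Let P : X → X be a linear projection (P² = P) with P 𝟙 = 𝟙, ‖P g‖_s ≤ ‖g‖_s, and |||P g + i(g − P g)·𝟙||| ≤ |||g||| + E h ‖g‖_s for all g ∈ X, where E ≥ 0 and h > 0. Define Q g := P L P g + (i(g) − i(P L P g))·𝟙 and the 2×2 matrix 𝒜 = [[1,0],[E h,1]]·[[A,B],[0,1]]. Then for every f ∈ X with P f = f and every k ≥ 0 one has the componentwise vector inequality (‖Q^k f‖_s, |||Q^k f|||)ᵀ ≤ 𝒜^k · (‖f‖_s, |||f|||)ᵀ. -/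
/-- Componentwise vector inequality for the iterates of the `i`-preserving
discretized operator: `(‖Q^k f‖_s, |||Q^k f|||)ᵀ ≤ 𝒜^k (‖f‖_s, |||f|||)ᵀ`,
where `𝒜 = [[1,0],[Eh,1]]·[[A,B],[0,1]]`, for every `f` with `P f = f`. -/
theorem small_matrix_inequality
    {X : Type*} [AddCommGroup X] [Module ℝ X]
    (ns na : Seminorm ℝ X) (i : X →ₗ[ℝ] ℝ) (one : X)
    (hone : ns one = 0)
    (L P : X →ₗ[ℝ] X) (A B E h : ℝ)
    (hA : 0 ≤ A) (hB : 0 ≤ B) (hE : 0 ≤ E) (hh : 0 < h)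
    (hiL : ∀ g : X, i (L g) = i g)
    (hLs : ∀ g : X, ns (L g) ≤ A * ns g + B * na g)
    (hLa : ∀ g : X, na (L g) ≤ na g)
    (hPproj : ∀ g : X, P (P g) = P g)
    (hPone : P one = one)
    (hPs : ∀ g : X, ns (P g) ≤ ns g)
    (hPa : ∀ g : X, na (P g + i (g - P g) • one) ≤ na g + E * h * ns g)
    (Q : X → X)
    (hQ : ∀ g : X, Q g = P (L (P g)) + (i g - i (P (L (P g)))) • one)
    (𝒜 : Matrix (Fin 2) (Fin 2) ℝ)
    (h𝒜 : 𝒜 = !![1, 0; E * h, 1] * !![A, B; 0, 1]) :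
    ∀ f : X, P f = f → ∀ k : ℕ,
      ![ns (Q^[k] f), na (Q^[k] f)] ≤ (𝒜 ^ k).mulVec ![ns f, na f] := by

  intro f hPf k
  -- entries of 𝒜
  have hA00 : 𝒜 0 0 = A := by simp [h𝒜, Matrix.mul_apply, Fin.sum_univ_two]
  have hA01 : 𝒜 0 1 = B := by simp [h𝒜, Matrix.mul_apply, Fin.sum_univ_two]
  have hA10 : 𝒜 1 0 = E * h * A := by simp [h𝒜, Matrix.mul_apply, Fin.sum_univ_two]
  have hA11 : 𝒜 1 1 = E * h * B + 1 := by simp [h𝒜, Matrix.mul_apply, Fin.sum_univ_two]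
  -- step lemma
  have step : ∀ g : X, P g = g →
      P (Q g) = Q g ∧ ns (Q g) ≤ A * ns g + B * na g ∧
      na (Q g) ≤ E * h * A * ns g + (E * h * B + 1) * na g := by
    intro g hg
    have hQg : Q g = P (L g) + (i (L g) - i (P (L g))) • one := by
      rw [hQ, hg, ← hiL g]
    refine ⟨?_, ?_, ?_⟩
    · rw [hQg]
      rw [map_add, map_smul, hPproj, hPone]
    · have h1 : ns (Q g) ≤ ns (P (L g)) := by
        rw [hQg]
        calc ns (P (L g) + (i (L g) - i (P (L g))) • one)
            ≤ ns (P (L g)) + ns ((i (L g) - i (P (L g))) • one) := map_add_le_add _ _ _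
          _ = ns (P (L g)) := by rw [map_smul_eq_mul, hone, mul_zero, add_zero]
      calc ns (Q g) ≤ ns (P (L g)) := h1
        _ ≤ ns (L g) := hPs _
        _ ≤ A * ns g + B * na g := hLs _
    · have h2 : Q g = P (L g) + i (L g - P (L g)) • one := by
        rw [hQg, map_sub]
      have h3 : na (Q g) ≤ na (L g) + E * h * ns (L g) := by
        rw [h2]; exact hPa (L g)
      have h4 := hLa g
      have h5 := hLs g
      have hEh : 0 ≤ E * h := mul_nonneg hE hh.le
      nlinarith [mul_le_mul_of_nonneg_left h5 hEh]
  -- main induction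
  have hnn : ∀ p q : Fin 2, 0 ≤ 𝒜 p q := by
    rw [Fin.forall_fin_two]
    constructor <;> rw [Fin.forall_fin_two] <;>
      refine ⟨?_, ?_⟩ <;> simp only [hA00, hA01, hA10, hA11] <;>
      positivity
  induction k with
  | zero =>
      rw [Pi.le_def, Fin.forall_fin_two]
      constructor <;>
        simp [Matrix.mulVec, dotProduct, Fin.sum_univ_two]
  | succ n ih =>
      have hinv : ∀ m : ℕ, P (Q^[m] f) = Q^[m] f := by
        intro m
        induction m with
        | zero => exact hPf
        | succ m ihm =>
            rw [Function.iterate_succ_apply']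
            exact (step _ ihm).1
      obtain ⟨-, hs, ha⟩ := step (Q^[n] f) (hinv n)
      have hmono : 𝒜.mulVec ![ns (Q^[n] f), na (Q^[n] f)] ≤
          (𝒜 ^ (n + 1)).mulVec ![ns f, na f] := by
        rw [pow_succ', ← Matrix.mulVec_mulVec]
        intro j
        have h0 := ih 0
        have h1 := ih 1
        simp only [Matrix.mulVec, dotProduct, Fin.sum_univ_two,
          Matrix.cons_val_zero, Matrix.cons_val_one, Matrix.head_cons] at h0 h1 ⊢
        have t0 := mul_le_mul_of_nonneg_left h0 (hnn j 0)
        have t1 := mul_le_mul_of_nonneg_left h1 (hnn j 1)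
        linarith
      refine le_trans ?_ hmono
      rw [Pi.le_def, Fin.forall_fin_two]
      constructor <;>
        simp only [Matrix.mulVec, dotProduct, Fin.sum_univ_two,
          Matrix.cons_val_zero, Matrix.cons_val_one, Matrix.head_cons,
          hA00, hA01, hA10, hA11, Function.iterate_succ_apply'] <;>
        linarith
end

section
/- In the setting of the componentwise matrix inequality for the discretized operator (X a real vector space with seminorms ‖·‖_s, |||·||| and weak seminorm ‖·‖; i : X → ℝ linear; 𝟙 ∈ X with ‖𝟙‖_s = 0; L linear with i∘L = i, ‖L g‖_s ≤ A‖g‖_s + B|||g|||, |||L g||| ≤ |||g|||; P a linear projection with P𝟙 = 𝟙, ‖P g‖_s ≤ ‖g‖_s, |||P g + i(g − P g)·𝟙||| ≤ |||g||| + E h ‖g‖_s; Q g := P L P g + (i(g) − i(P L P g))·𝟙; 𝒜 = [[1,0],[E h,1]]·[[A,B],[0,1]]), assume additionally that there exist M ≥ 0 and α > 0 such that every g ∈ X with P g = g satisfies ‖g‖_s ≤ (M/h^α) ‖g‖ and |||g||| ≤ ‖g‖. Define (R_{k,1}, R_{k,2})ᵀ := 𝒜^k · (M/h^α, 1)ᵀ.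 Then for every f ∈ X with P f = f and every k ≥ 0, ‖Q^k f‖_s ≤ R_{k,1} ‖f‖ and |||Q^k f||| ≤ R_{k,2} ‖f‖. -/
/-- Bounds `‖Q^k f‖_s ≤ R_{k,1} ‖f‖` and `|||Q^k f||| ≤ R_{k,2} ‖f‖` for `f` in
the approximating space (`P f = f`), where `(R_{k,1},R_{k,2})ᵀ = 𝒜^k (M/h^α, 1)ᵀ`. -/
theorem Rkh_bounds
    {X : Type*} [AddCommGroup X] [Module ℝ X]
    (nw ns na : Seminorm ℝ X) (i : X →ₗ[ℝ] ℝ) (one : X)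
    (hone : ns one = 0)
    (L P : X →ₗ[ℝ] X) (A B E h : ℝ)
    (hA : 0 ≤ A) (hB : 0 ≤ B) (hE : 0 ≤ E) (hh : 0 < h)
    (hiL : ∀ g : X, i (L g) = i g)
    (hLs : ∀ g : X, ns (L g) ≤ A * ns g + B * na g)
    (hLa : ∀ g : X, na (L g) ≤ na g)
    (hPproj : ∀ g : X, P (P g) = P g)
    (hPone : P one = one)
    (hPs : ∀ g : X, ns (P g) ≤ ns g)
    (hPa : ∀ g : X, na (P g + i (g - P g) • one) ≤ na g + E * h * ns g)
    (Q : X → X)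
    (hQ : ∀ g : X, Q g = P (L (P g)) + (i g - i (P (L (P g)))) • one)
    (𝒜 : Matrix (Fin 2) (Fin 2) ℝ)
    (h𝒜 : 𝒜 = !![1, 0; E * h, 1] * !![A, B; 0, 1])
    (M α : ℝ) (hM : 0 ≤ M) (hα : 0 < α)
    (hsw : ∀ g : X, P g = g → ns g ≤ M / h ^ α * nw g)
    (haw : ∀ g : X, P g = g → na g ≤ nw g) :
    ∀ f : X, P f = f → ∀ k : ℕ,
      ns (Q^[k] f) ≤ ((𝒜 ^ k).mulVec ![M / h ^ α, 1]) 0 * nw f ∧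
      na (Q^[k] f) ≤ ((𝒜 ^ k).mulVec ![M / h ^ α, 1]) 1 * nw f := by
  intro f hPf
  -- invariance of the approximating space under Q
  have hPinv : ∀ k : ℕ, P (Q^[k] f) = Q^[k] f := by
    intro k
    induction k with
    | zero => simpa using hPf
    | succ k ih =>
      rw [Function.iterate_succ_apply', hQ, map_add, map_smul, hPone,
        hPproj]
  intro k
  induction k with
  | zero =>
    simp only [Function.iterate_zero, id, pow_zero, Matrix.one_mulVec]
    refine ⟨?_, ?_⟩
    · simpa using hsw f hPf
    · simpa using haw f hPf
  | succ k ih =>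
    obtain ⟨ih0, ih1⟩ := ih
    set g := Q^[k] f with hg
    have hPg : P g = g := hPinv k
    set r0 := ((𝒜 ^ k).mulVec ![M / h ^ α, 1]) 0 with hr0
    set r1 := ((𝒜 ^ k).mulVec ![M / h ^ α, 1]) 1 with hr1
    have hiter : Q^[k+1] f = Q g := Function.iterate_succ_apply' Q k f
    have hQg : Q g = P (L g) + (i g - i (P (L g))) • one := by
      rw [hQ, hPg]
    -- strong norm bound on Q g
    have hs1 : ns (Q g) ≤ A * ns g + B * na g := by
      calc ns (Q g) ≤ ns (P (L g)) + ns ((i g - i (P (L g))) • one) := by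
            rw [hQg]; exact map_add_le_add ns _ _
        _ = ns (P (L g)) := by rw [map_smul_eq_mul, hone, mul_zero, add_zero]
        _ ≤ ns (L g) := hPs _
        _ ≤ A * ns g + B * na g := hLs g
    -- auxiliary norm bound on Q g
    have ha1 : na (Q g) ≤ na g + E * h * (A * ns g + B * na g) := by
      have hc : i g - i (P (L g)) = i (L g - P (L g)) := by
        rw [map_sub, hiL]
      have := hPa (L g)
      rw [hQg, hc]
      calc na (P (L g) + i (L g - P (L g)) • one)
          ≤ na (L g) + E * h * ns (L g) := hPa (L g)
        _ ≤ na g + E * h * (A * ns g + B * na g) := by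
            have h1 : E * h * ns (L g) ≤ E * h * (A * ns g + B * na g) :=
              mul_le_mul_of_nonneg_left (hLs g)
                (mul_nonneg hE hh.le)
            exact add_le_add (hLa g) h1
    -- matrix entry computations
    have hpow : (𝒜 ^ (k+1)).mulVec ![M / h ^ α, 1]
        = 𝒜.mulVec ((𝒜 ^ k).mulVec ![M / h ^ α, 1]) := by
      rw [pow_succ', Matrix.mulVec_mulVec]
    have hm0 : ∀ v : Fin 2 → ℝ, 𝒜.mulVec v 0 = A * v 0 + B * v 1 := by
      intro v
      rw [h𝒜]
      simp [Matrix.mulVec, dotProduct, Fin.sum_univ_two]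
      try ring
    have hm1 : ∀ v : Fin 2 → ℝ, 𝒜.mulVec v 1 = v 1 + E * h * (A * v 0 + B * v 1) := by
      intro v
      rw [h𝒜]
      simp [Matrix.mulVec, dotProduct, Fin.sum_univ_two]
      try ring
    have hE0 : ((𝒜 ^ (k+1)).mulVec ![M / h ^ α, 1]) 0 = A * r0 + B * r1 := by
      rw [hpow, hm0]
    have hE1 : ((𝒜 ^ (k+1)).mulVec ![M / h ^ α, 1]) 1
        = r1 + E * h * (A * r0 + B * r1) := by
      rw [hpow, hm1]
    have hwnn : 0 ≤ nw f := apply_nonneg nw f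
    have hsg : A * ns g + B * na g ≤ (A * r0 + B * r1) * nw f := by
      have := add_le_add (mul_le_mul_of_nonneg_left ih0 hA)
        (mul_le_mul_of_nonneg_left ih1 hB)
      calc A * ns g + B * na g ≤ A * (r0 * nw f) + B * (r1 * nw f) := this
        _ = (A * r0 + B * r1) * nw f := by ring
    constructor
    · rw [hiter, hE0]
      exact hs1.trans hsg
    · rw [hiter, hE1]
      calc na (Q g) ≤ na g + E * h * (A * ns g + B * na g) := ha1
        _ ≤ r1 * nw f + E * h * ((A * r0 + B * r1) * nw f) := by
            exact add_le_add ih1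
              (mul_le_mul_of_nonneg_left hsg (mul_nonneg hE hh.le))
        _ = (r1 + E * h * (A * r0 + B * r1)) * nw f := by ring
end

section
/- Let X be a real vector space with seminorms ‖·‖ (the weak norm) and ‖·‖_s (the strong seminorm), and let i : X → ℝ be linear. Let Q and Q_F be linear operators on X with i(Q g) = i(g) and i(Q_F g) = i(g) for all g ∈ X. Suppose: (a) there are nonnegative reals (C_k)_{k≥0} with ‖Q^k v‖ ≤ C_k ‖v‖ for every v ∈ X with i(v) = 0 and every k ≥ 0; (b) there are constants K ≥ 0, h > 0, N ≥ 0 such that ‖Q g − Q_F g‖ ≤ 2 K h (N ‖g‖_s + ‖Q_F g‖_s) for every g ∈ X. Then for every f ∈ X with i(f) = 0 and every m ≥ 1, ‖(Q^m − Q_F^m) f‖ ≤ 2 K h Σ_{k=0}^{m−1} C_{m−1−k} (N ‖Q_F^k f‖_s + ‖Q_F^{k+1} f‖_s). -/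
/-- Coarse-fine difference bound: for `f` with `i f = 0` and `m ≥ 1`,
`‖(Q^m - Q_F^m) f‖ ≤ 2Kh Σ_{k=0}^{m-1} C_{m-1-k} (N ‖Q_F^k f‖_s + ‖Q_F^{k+1} f‖_s)`. -/
theorem coarse_fine_difference_bound
    {X : Type*} [AddCommGroup X] [Module ℝ X]
    (nw ns : Seminorm ℝ X) (i : X →ₗ[ℝ] ℝ)
    (Q QF : X →ₗ[ℝ] X)
    (hiQ : ∀ g : X, i (Q g) = i g) (hiQF : ∀ g : X, i (QF g) = i g)
    (C : ℕ → ℝ) (hCpos : ∀ k, 0 ≤ C k)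
    (hC : ∀ v : X, i v = 0 → ∀ k : ℕ, nw ((⇑Q)^[k] v) ≤ C k * nw v)
    (K h N : ℝ) (hK : 0 ≤ K) (hh : 0 < h) (hN : 0 ≤ N)
    (hdiff : ∀ g : X, nw (Q g - QF g) ≤ 2 * K * h * (N * ns g + ns (QF g))) :
    ∀ f : X, i f = 0 → ∀ m : ℕ, 1 ≤ m →
      nw ((⇑Q)^[m] f - (⇑QF)^[m] f) ≤
        2 * K * h * ∑ k ∈ Finset.range m,
          C (m - 1 - k) * (N * ns ((⇑QF)^[k] f) + ns ((⇑QF)^[k + 1] f)) := by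
  suffices H : ∀ m : ℕ, ∀ f : X, i f = 0 →
      nw ((⇑Q)^[m] f - (⇑QF)^[m] f) ≤
        2 * K * h * ∑ k ∈ Finset.range m,
          C (m - 1 - k) * (N * ns ((⇑QF)^[k] f) + ns ((⇑QF)^[k + 1] f)) by
    intro f hf m _
    exact H m f hf
  intro m
  induction m with
  | zero =>
    intro f hf
    simp
  | succ m ih =>
    intro f hf
    have hfQ : i (Q f - QF f) = 0 := by
      rw [map_sub, hiQ, hiQF, sub_self]
    -- split the difference
    have e : (⇑Q)^[m + 1] f - (⇑QF)^[m + 1] f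
        = (⇑Q)^[m] (Q f - QF f) + ((⇑Q)^[m] (QF f) - (⇑QF)^[m] (QF f)) := by
      rw [Function.iterate_succ_apply, Function.iterate_succ_apply,
        ← Module.End.pow_apply, ← Module.End.pow_apply, ← Module.End.pow_apply,
        ← Module.End.pow_apply, map_sub]
      abel
    have hA : nw ((⇑Q)^[m] (Q f - QF f))
        ≤ C m * (2 * K * h * (N * ns f + ns (QF f))) := by
      calc nw ((⇑Q)^[m] (Q f - QF f)) ≤ C m * nw (Q f - QF f) := hC _ hfQ m
        _ ≤ C m * (2 * K * h * (N * ns f + ns (QF f))) :=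
          mul_le_mul_of_nonneg_left (hdiff f) (hCpos m)
    have hB := ih (QF f) (by rw [hiQF]; exact hf)
    have hsum : ∑ k ∈ Finset.range (m + 1),
        C (m + 1 - 1 - k) * (N * ns ((⇑QF)^[k] f) + ns ((⇑QF)^[k + 1] f))
        = (∑ k ∈ Finset.range m,
            C (m - 1 - k) * (N * ns ((⇑QF)^[k] (QF f)) + ns ((⇑QF)^[k + 1] (QF f))))
          + C m * (N * ns f + ns (QF f)) := by
      rw [Finset.sum_range_succ']
      congr 1
      apply Finset.sum_congr rfl
      intro k hk
      have h1 : m + 1 - 1 - (k + 1) = m - 1 - k := by omega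
      rw [h1, ← Function.iterate_succ_apply, ← Function.iterate_succ_apply]
    rw [e, hsum, mul_add]
    calc nw ((⇑Q)^[m] (Q f - QF f) + ((⇑Q)^[m] (QF f) - (⇑QF)^[m] (QF f)))
        ≤ nw ((⇑Q)^[m] (Q f - QF f)) + nw ((⇑Q)^[m] (QF f) - (⇑QF)^[m] (QF f)) :=
          map_add_le_add nw _ _
      _ ≤ C m * (2 * K * h * (N * ns f + ns (QF f)))
          + 2 * K * h * ∑ k ∈ Finset.range m,
              C (m - 1 - k) * (N * ns ((⇑QF)^[k] (QF f)) + ns ((⇑QF)^[k + 1] (QF f))) :=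
          add_le_add hA hB
      _ = 2 * K * h * ∑ k ∈ Finset.range m,
              C (m - 1 - k) * (N * ns ((⇑QF)^[k] (QF f)) + ns ((⇑QF)^[k + 1] (QF f)))
          + 2 * K * h * (C m * (N * ns f + ns (QF f))) := by ring
end

section
/- Let X be a real vector space with seminorms ‖·‖ (the weak norm) and ‖·‖_s (the strong seminorm), and let i : X → ℝ be linear. Let Q and Q_F be linear operators on X with i(Q g) = i(g) and i(Q_F g) = i(g) for all g ∈ X. Suppose: (a) there are nonnegative reals (C_k)_{k≥0} with ‖Q^k v‖ ≤ C_k ‖v‖ for every v ∈ X with i(v) = 0 and every k ≥ 0; (b) there are constants K ≥ 0, h > 0, N ≥ 0 such that ‖Q g − Q_F g‖ ≤ 2 K h (N ‖g‖_s + ‖Q_F g‖_s) for every g ∈ X; (c) there are nonnegative reals (R_k)_{k≥0} with ‖Q_F^k f‖_s ≤ R_k ‖f‖ for every f ∈ X with i(f) = 0 and every k ≥ 0. Then for every f ∈ X with i(f) = 0 and every m ≥ 1, ‖Q_F^m f‖ ≤ ( C_m + 2 K h Σ_{k=0}^{m−1} C_{m−1−k} (N R_k + R_{k+1}) ) ‖f‖.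 -/
/-- Coarse-fine bound on the convergence rate of the fine discretization:
`‖Q_F^m f‖ ≤ (C_m + 2Kh Σ_{k=0}^{m-1} C_{m-1-k}(N R_k + R_{k+1})) ‖f‖`
for every `f` with `i f = 0`. -/
theorem coarse_fine_norm_bound
    {X : Type*} [AddCommGroup X] [Module ℝ X]
    (nw ns : Seminorm ℝ X) (i : X →ₗ[ℝ] ℝ)
    (Q QF : X →ₗ[ℝ] X)
    (hiQ : ∀ g : X, i (Q g) = i g) (hiQF : ∀ g : X, i (QF g) = i g)
    (C : ℕ → ℝ) (hCpos : ∀ k, 0 ≤ C k)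
    (hC : ∀ v : X, i v = 0 → ∀ k : ℕ, nw ((⇑Q)^[k] v) ≤ C k * nw v)
    (K h N : ℝ) (hK : 0 ≤ K) (hh : 0 < h) (hN : 0 ≤ N)
    (hdiff : ∀ g : X, nw (Q g - QF g) ≤ 2 * K * h * (N * ns g + ns (QF g)))
    (R : ℕ → ℝ) (hRpos : ∀ k, 0 ≤ R k)
    (hR : ∀ f : X, i f = 0 → ∀ k : ℕ, ns ((⇑QF)^[k] f) ≤ R k * nw f) :
    ∀ f : X, i f = 0 → ∀ m : ℕ, 1 ≤ m →
      nw ((⇑QF)^[m] f) ≤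
        (C m + 2 * K * h * ∑ k ∈ Finset.range m,
          C (m - 1 - k) * (N * R k + R (k + 1))) * nw f := by
  intro f hf m _
  -- telescoping identity
  have key : ∀ n : ℕ, (⇑QF)^[n] f - (⇑Q)^[n] f
      = ∑ k ∈ Finset.range n,
          (⇑Q)^[n - 1 - k] (QF ((⇑QF)^[k] f) - Q ((⇑QF)^[k] f)) := by
    intro n
    induction n with
    | zero => simp
    | succ n ih =>
      rw [Finset.sum_range_succ]
      have h1 : ∀ k ∈ Finset.range n,
          (⇑Q)^[n + 1 - 1 - k] (QF ((⇑QF)^[k] f) - Q ((⇑QF)^[k] f))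
          = Q ((⇑Q)^[n - 1 - k] (QF ((⇑QF)^[k] f) - Q ((⇑QF)^[k] f))) := by
        intro k hk
        rw [Finset.mem_range] at hk
        have he : n + 1 - 1 - k = (n - 1 - k) + 1 := by omega
        rw [he, Function.iterate_succ_apply']
      rw [Finset.sum_congr rfl h1, ← map_sum Q, ← ih]
      have he : n + 1 - 1 - n = 0 := by omega
      rw [he]
      simp only [Function.iterate_zero_apply, Function.iterate_succ_apply', map_sub]
      abel
  have hnw : nw ((⇑QF)^[m] f) ≤ nw ((⇑Q)^[m] f)
      + nw ((⇑QF)^[m] f - (⇑Q)^[m] f) := by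
    have := map_add_le_add nw ((⇑Q)^[m] f) ((⇑QF)^[m] f - (⇑Q)^[m] f)
    simpa using this
  have hterm : ∀ k ∈ Finset.range m,
      nw ((⇑Q)^[m - 1 - k] (QF ((⇑QF)^[k] f) - Q ((⇑QF)^[k] f)))
        ≤ 2 * K * h * (C (m - 1 - k) * (N * R k + R (k + 1))) * nw f := by
    intro k _
    set g := (⇑QF)^[k] f with hg
    have hig : i (QF g - Q g) = 0 := by
      simp [map_sub, hiQ, hiQF]
    have h1 := hC (QF g - Q g) hig (m - 1 - k)
    have h2 : nw (QF g - Q g) = nw (Q g - QF g) := map_sub_rev nw _ _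
    have h3 := hdiff g
    have h4 : ns g ≤ R k * nw f := hR f hf k
    have h5 : ns (QF g) ≤ R (k + 1) * nw f := by
      have := hR f hf (k + 1)
      rwa [Function.iterate_succ_apply'] at this
    have hKh : 0 ≤ 2 * K * h := by positivity
    calc nw ((⇑Q)^[m - 1 - k] (QF g - Q g))
        ≤ C (m - 1 - k) * nw (QF g - Q g) := h1
      _ ≤ C (m - 1 - k) * (2 * K * h * (N * ns g + ns (QF g))) := by
          rw [h2] at *
          exact mul_le_mul_of_nonneg_left h3 (hCpos _)
      _ ≤ C (m - 1 - k) * (2 * K * h * (N * (R k * nw f) + R (k + 1) * nw f)) := by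
          apply mul_le_mul_of_nonneg_left _ (hCpos _)
          apply mul_le_mul_of_nonneg_left _ hKh
          exact add_le_add (mul_le_mul_of_nonneg_left h4 hN) h5
      _ = 2 * K * h * (C (m - 1 - k) * (N * R k + R (k + 1))) * nw f := by ring
  have hsum : nw ((⇑QF)^[m] f - (⇑Q)^[m] f)
      ≤ ∑ k ∈ Finset.range m,
          2 * K * h * (C (m - 1 - k) * (N * R k + R (k + 1))) * nw f := by
    rw [key m]
    refine le_trans ?_ (Finset.sum_le_sum hterm)
    classical
    induction (Finset.range m) using Finset.cons_induction with
    | empty => simp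
    | cons a s ha ih =>
      rw [Finset.sum_cons, Finset.sum_cons]
      exact le_trans (map_add_le_add nw _ _) (add_le_add le_rfl ih)
  have hQm := hC f hf m
  calc nw ((⇑QF)^[m] f)
      ≤ nw ((⇑Q)^[m] f) + nw ((⇑QF)^[m] f - (⇑Q)^[m] f) := hnw
    _ ≤ C m * nw f + ∑ k ∈ Finset.range m,
          2 * K * h * (C (m - 1 - k) * (N * R k + R (k + 1))) * nw f :=
        add_le_add hQm hsum
    _ = (C m + 2 * K * h * ∑ k ∈ Finset.range m,
          C (m - 1 - k) * (N * R k + R (k + 1))) * nw f := by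
        rw [add_mul, Finset.mul_sum, Finset.sum_mul]
end

section
/- Let X be a real vector space with seminorms ‖·‖ (the weak norm) and ‖·‖_s (the strong seminorm), let i : X → ℝ be a linear functional with |i(g)| ≤ ‖g‖ for all g ∈ X, and let 𝟙 ∈ X satisfy ‖𝟙‖ = 1 and i(𝟙) = 1. Let L : X → X be linear with i(L g) = i(g) for all g and ‖L g‖ ≤ N ‖g‖ for all g, where N ≥ 0. Let P : X → X be linear with ‖P g‖ ≤ ‖g‖ and ‖P g − g‖ ≤ K h ‖g‖_s for all g ∈ X, where K ≥ 0 and h > 0, and define Q g := P L P g + (i(g) − i(P L P g))·𝟙. Let u ∈ X satisfy L u = u and i(u) = 1. Let m ≥ 1 and let C_0, …, C_m be nonnegative reals with ‖Q^k v‖ ≤ C_k ‖v‖ for every v ∈ X with i(v) = 0 and 0 ≤ k ≤ m, and assume C_m < 1. Let ũ ∈ X satisfy ‖Q ũ − ũ‖ ≤ ε₁ and |i(ũ) − 1| ≤ ε₂ with 0 ≤ ε₂ < 1. Then ‖u − ũ‖ ≤ ((C_0 + C_1 + ⋯ + C_{m−1})/(1 − C_m)) · (2 K h (1 + N) ‖u‖_s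 + ε₁/(1 − ε₂)) + (ε₂/(1 − ε₂)) ‖ũ‖. -/
/-!
Normalize `ũ` to `v = i(ũ)⁻¹ • ũ`, so that `e = u - v` lies in the kernel of `i`, as does
`d = Q e - e` because `Q` preserves `i`. Since `Q` is linear, `Q^m e - e` telescopes into
`∑_{k<m} Q^k d`, whence `(1 - C_m) ‖e‖ ≤ (C_0 + ⋯ + C_{m-1}) ‖d‖`. The defect
`d = (Q u - u) - (Q v - v)` is bounded by the consistency error of the discretization at the exact
fixed point, `2 K h (1 + N) ‖u‖_s`, plus the rescaled residual `ε₁ / (1 - ε₂)`; the normalization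
itself costs `‖v - ũ‖ ≤ ε₂ / (1 - ε₂) ‖ũ‖`.
-/

open Finset

theorem LinearMap.iterate_sub_self_eq_sum {R X : Type*} [Semiring R] [AddCommGroup X]
    [Module R X] (T : X →ₗ[R] X) (e : X) (m : ℕ) :
    T^[m] e - e = ∑ j ∈ Finset.range m, T^[j] (T e - e) := by
  have hstep (j : ℕ) : T^[j] (T e - e) = T^[j + 1] e - T^[j] e := by
    rw [← Module.End.pow_apply, map_sub, Module.End.pow_apply, Module.End.pow_apply,
      Function.iterate_succ_apply]
  simp only [hstep, sum_range_sub (fun j => T^[j] e), Function.iterate_zero_apply]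

section

variable {X : Type*} [AddCommGroup X] [Module ℝ X]

theorem Seminorm.le_of_iterate_le (p : Seminorm ℝ X) (T : X →ₗ[ℝ] X) {m : ℕ} {C : ℕ → ℝ}
    {e : X} (he : p (T^[m] e) ≤ C m * p e)
    (hd : ∀ k < m, p (T^[k] (T e - e)) ≤ C k * p (T e - e)) (hCm : C m < 1) :
    p e ≤ (∑ k ∈ range m, C k) / (1 - C m) * p (T e - e) := by
  have hsum : p (∑ k ∈ range m, T^[k] (T e - e)) ≤ (∑ k ∈ range m, C k) * p (T e - e) :=
    calc _ ≤ ∑ k ∈ range m, p (T^[k] (T e - e)) :=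
          le_sum_of_subadditive p (map_zero p).le (map_add_le_add p) _ _
      _ ≤ ∑ k ∈ range m, C k * p (T e - e) :=
          sum_le_sum fun k hk => hd k (mem_range.mp hk)
      _ = _ := (sum_mul ..).symm
  have hmain : p e ≤ C m * p e + (∑ k ∈ range m, C k) * p (T e - e) :=
    calc p e = p (T^[m] e - ∑ k ∈ range m, T^[k] (T e - e)) := by
          rw [← T.iterate_sub_self_eq_sum, sub_sub_cancel]
      _ ≤ p (T^[m] e) + p (∑ k ∈ range m, T^[k] (T e - e)) := map_sub_le_add p _ _
      _ ≤ _ := add_le_add he hsum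
  rw [div_mul_eq_mul_div, le_div_iff₀ (sub_pos.mpr hCm)]
  linarith

def correctedOp (i : X →ₗ[ℝ] ℝ) (one : X) (A : X →ₗ[ℝ] X) : X →ₗ[ℝ] X :=
  A + (i - i ∘ₗ A).smulRight one

theorem correctedOp_apply (i : X →ₗ[ℝ] ℝ) (one : X) (A : X →ₗ[ℝ] X) (g : X) :
    correctedOp i one A g = A g + (i g - i (A g)) • one :=
  rfl

theorem apply_correctedOp {i : X →ₗ[ℝ] ℝ} {one : X} (hione : i one = 1) (A : X →ₗ[ℝ] X)
    (g : X) : i (correctedOp i one A g) = i g := by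
  simp [correctedOp_apply, hione]

theorem Seminorm.correctedOp_sub_le (p : Seminorm ℝ X) {i : X →ₗ[ℝ] ℝ} {one : X}
    (hone : p one = 1) (hi : ∀ g, |i g| ≤ p g) (A : X →ₗ[ℝ] X) (g : X) :
    p (correctedOp i one A g - g) ≤ 2 * p (A g - g) :=
  calc p (correctedOp i one A g - g) = p ((A g - g) + i (g - A g) • one) := by
        rw [correctedOp_apply, map_sub i]; congr 1; abel
    _ ≤ p (A g - g) + |i (g - A g)| := by
        simpa [map_smul_eq_mul, hone] using map_add_le_add p (A g - g) (i (g - A g) • one)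
    _ ≤ p (A g - g) + p (A g - g) := by
        grw [hi, ← map_neg_eq_map p, neg_sub]
    _ = 2 * p (A g - g) := by ring

theorem Seminorm.comp_comp_sub_le (p : Seminorm ℝ X) {P L : X →ₗ[ℝ] X} {N : ℝ}
    (hP : ∀ g, p (P g) ≤ p g) (hL : ∀ g, p (L g) ≤ N * p g) {u : X} (hu : L u = u) :
    p (P (L (P u)) - u) ≤ (1 + N) * p (P u - u) :=
  calc p (P (L (P u)) - u) = p (P (L (P u - u)) + (P u - u)) := by
        rw [map_sub L, hu]; congr 1; rw [map_sub]; abel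
    _ ≤ N * p (P u - u) + p (P u - u) := by
        linarith [map_add_le_add p (P (L (P u - u))) (P u - u), hP (L (P u - u)), hL (P u - u)]
    _ = (1 + N) * p (P u - u) := by ring

theorem Seminorm.inv_smul_le_div (p : Seminorm ℝ X) {a ε : ℝ} (h : |a - 1| ≤ ε) (hε : ε < 1)
    (x : X) : p (a⁻¹ • x) ≤ p x / (1 - ε) := by
  have ha : 1 - ε ≤ a := by linarith [(abs_le.mp h).1]
  rw [map_smul_eq_mul, Real.norm_eq_abs, abs_inv, abs_of_pos (by linarith), inv_mul_eq_div]
  exact div_le_div_of_nonneg_left (apply_nonneg p x) (by linarith) ha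

theorem Seminorm.inv_smul_sub_self_le (p : Seminorm ℝ X) {a ε : ℝ} (h : |a - 1| ≤ ε)
    (hε : ε < 1) (x : X) : p (a⁻¹ • x - x) ≤ ε / (1 - ε) * p x := by
  have ha : 1 - ε ≤ a := by linarith [(abs_le.mp h).1]
  have ha0 : 0 < a := by linarith
  have hε0 : 0 ≤ ε := (abs_nonneg _).trans h
  rw [show a⁻¹ • x - x = (a⁻¹ - 1) • x by rw [sub_smul, one_smul], map_smul_eq_mul,
    Real.norm_eq_abs, show a⁻¹ - 1 = (1 - a) / a by field_simp, abs_div, abs_of_pos ha0,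
    abs_sub_comm]
  gcongr

end

theorem fixed_point_error_estimate_approx_normalization_general
    {X : Type*} [AddCommGroup X] [Module ℝ X]
    (nw ns : Seminorm ℝ X) (i : X →ₗ[ℝ] ℝ) (one : X)
    (hone : nw one = 1) (hione : i one = 1)
    (hi : ∀ g : X, |i g| ≤ nw g)
    (L P : X →ₗ[ℝ] X) (N K h : ℝ) (hN : 0 ≤ N)
    (hLbound : ∀ g : X, nw (L g) ≤ N * nw g)
    (hPw : ∀ g : X, nw (P g) ≤ nw g)
    (hPapprox : ∀ g : X, nw (P g - g) ≤ K * h * ns g)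
    (Q : X → X)
    (hQ : ∀ g : X, Q g = P (L (P g)) + (i g - i (P (L (P g)))) • one)
    (u : X) (hu : L u = u) (hiu : i u = 1)
    (m : ℕ) (C : ℕ → ℝ)
    (hCpos : ∀ k ≤ m, 0 ≤ C k)
    (hC : ∀ v : X, i v = 0 → ∀ k ≤ m, nw (Q^[k] v) ≤ C k * nw v)
    (hCm : C m < 1)
    (ut : X) (ε₁ ε₂ : ℝ)
    (hres : nw (Q ut - ut) ≤ ε₁)
    (hnorm : |i ut - 1| ≤ ε₂) (hε₂1 : ε₂ < 1) :
    nw (u - ut) ≤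
      ((∑ k ∈ Finset.range m, C k) / (1 - C m)) *
        (2 * K * h * (1 + N) * ns u + ε₁ / (1 - ε₂)) +
      ε₂ / (1 - ε₂) * nw ut := by
  obtain rfl : Q = correctedOp i one (P ∘ₗ L ∘ₗ P) := funext hQ
  set Q := correctedOp i one (P ∘ₗ L ∘ₗ P)
  have hiut : i ut ≠ 0 := by linarith [(abs_le.mp hnorm).1]
  set v := (i ut)⁻¹ • ut with hv
  have hres_u : nw (Q u - u) ≤ 2 * K * h * (1 + N) * ns u :=
    calc nw (Q u - u) ≤ 2 * nw (P (L (P u)) - u) := nw.correctedOp_sub_le hone hi _ u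
      _ ≤ 2 * ((1 + N) * nw (P u - u)) := by grw [nw.comp_comp_sub_le hPw hLbound hu]
      _ ≤ 2 * ((1 + N) * (K * h * ns u)) := by grw [hPapprox u]
      _ = 2 * K * h * (1 + N) * ns u := by ring
  have hres_v : nw (Q v - v) ≤ ε₁ / (1 - ε₂) :=
    calc nw (Q v - v) = nw ((i ut)⁻¹ • (Q ut - ut)) := by rw [hv, map_smul, smul_sub]
      _ ≤ nw (Q ut - ut) / (1 - ε₂) := nw.inv_smul_le_div hnorm hε₂1 _
      _ ≤ ε₁ / (1 - ε₂) := by gcongr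
  have hie : i (u - v) = 0 := by simp [v, hiu, hiut]
  have hiQe : i (Q (u - v) - (u - v)) = 0 := by rw [map_sub, apply_correctedOp hione, sub_self]
  have he := nw.le_of_iterate_le Q (hC _ hie m le_rfl) (fun k hk => hC _ hiQe k hk.le) hCm
  have hS : 0 ≤ (∑ k ∈ Finset.range m, C k) / (1 - C m) :=
    div_nonneg (sum_nonneg fun k hk => hCpos k (mem_range.mp hk).le) (by linarith)
  have hd : nw (Q (u - v) - (u - v)) ≤ 2 * K * h * (1 + N) * ns u + ε₁ / (1 - ε₂) := by
    rw [show Q (u - v) - (u - v) = (Q u - u) - (Q v - v) by rw [map_sub]; abel]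
    exact (map_sub_le_add nw _ _).trans (add_le_add hres_u hres_v)
  calc nw (u - ut) ≤ nw (u - v) + nw (v - ut) := by
        simpa using map_add_le_add nw (u - v) (v - ut)
    _ ≤ _ := add_le_add (he.trans (mul_le_mul_of_nonneg_left hd hS))
        (nw.inv_smul_sub_self_le hnorm hε₂1 ut)

/-- Fixed point error estimate with approximately normalized numerical eigenvector:
`‖u - ũ‖ ≤ ((C_0+⋯+C_{m-1})/(1-C_m)) (2Kh(1+N)‖u‖_s + ε₁/(1-ε₂)) + (ε₂/(1-ε₂))‖ũ‖`. -/
theorem fixed_point_error_estimate_approx_normalization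
    {X : Type*} [AddCommGroup X] [Module ℝ X]
    (nw ns : Seminorm ℝ X) (i : X →ₗ[ℝ] ℝ) (one : X)
    (hone : nw one = 1) (hione : i one = 1)
    (hi : ∀ g : X, |i g| ≤ nw g)
    (L P : X →ₗ[ℝ] X) (N K h : ℝ) (hN : 0 ≤ N) (hK : 0 ≤ K) (hh : 0 < h)
    (hiL : ∀ g : X, i (L g) = i g)
    (hLbound : ∀ g : X, nw (L g) ≤ N * nw g)
    (hPw : ∀ g : X, nw (P g) ≤ nw g)
    (hPapprox : ∀ g : X, nw (P g - g) ≤ K * h * ns g)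
    (Q : X → X)
    (hQ : ∀ g : X, Q g = P (L (P g)) + (i g - i (P (L (P g)))) • one)
    (u : X) (hu : L u = u) (hiu : i u = 1)
    (m : ℕ) (hm : 1 ≤ m) (C : ℕ → ℝ)
    (hCpos : ∀ k ≤ m, 0 ≤ C k)
    (hC : ∀ v : X, i v = 0 → ∀ k ≤ m, nw (Q^[k] v) ≤ C k * nw v)
    (hCm : C m < 1)
    (ut : X) (ε₁ ε₂ : ℝ)
    (hres : nw (Q ut - ut) ≤ ε₁)
    (hnorm : |i ut - 1| ≤ ε₂) (hε₂0 : 0 ≤ ε₂) (hε₂1 : ε₂ < 1) :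
    nw (u - ut) ≤
      ((∑ k ∈ Finset.range m, C k) / (1 - C m)) *
        (2 * K * h * (1 + N) * ns u + ε₁ / (1 - ε₂)) +
      ε₂ / (1 - ε₂) * nw ut :=
  fixed_point_error_estimate_approx_normalization_general nw ns i one hone hione hi L P N K h hN
    hLbound hPw hPapprox Q hQ u hu hiu m C hCpos hC hCm ut ε₁ ε₂ hres hnorm hε₂1
end

section
/- Let 0 = a_0 < a_1 < ⋯ < a_b = 1 and P_k = [a_{k−1}, a_k). Let T : [0,1] → [0,1] be a map whose restriction to each P_k extends to a C² injective function T_k on [a_{k−1}, a_k] with |T_k'(x)| > 2 and |T_k''(x)/T_k'(x)²| ≤ D for all x ∈ [a_{k−1}, a_k]. Let L be the transfer operator: (L f)(x) = Σ_{k : x ∈ T_k(P_k)} f(T_k^{−1}(x)) / |T_k'(T_k^{−1}(x))|. Then for every f : [0,1] → ℝ of bounded variation, Var(L f) ≤ A Var(f) + B ‖f‖_{L¹}, where A = sup_{x} 2/|T'(x)| and B = max_k 2/(a_k − a_{k−1}) + D. -/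
/-!
Write `w_k = 1 / |T_k'|`, so that `L f = ∑_k 1_{T_k(P_k)} · (f w_k) ∘ S_k`. A continuous injective
branch is monotone, so composing with its inverse `S_k` does not change variation, and cutting
`[0,1]` at the endpoints of `T_k(P_k)` bounds the variation of the `k`-th term by
`Var_{P_k}(f w_k)` plus the two boundary values `|f w_k|(a_{k-1})`, `|f w_k|(a_k)`.

Since `|w_k'| = |T_k''/T_k'^2| ≤ D`, the weight `w_k` is `D`-Lipschitz, and on fine partitions the
variation of a product obeys `Var(f w) ≤ sup |w| · Var f + Lip(w) · ‖f‖_{L¹}`. Since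
`|f(p)| + |f(q)| ≤ 2 |f(t)| + Var_{[p,q]} f` for every `t ∈ [p,q]`, averaging over `t` gives
`|f(p)| + |f(q)| ≤ Var_{[p,q]} f + 2/(q-p) ∫_p^q |f|`, and `w_k ≤ min (A/2) 1` turns the boundary
terms into `(A/2) Var_{P_k} f + 2/|P_k| ∫_{P_k} |f|`. Summing over the branches, variation and
integral are additive along the partition.
-/

open Set MeasureTheory Filter Topology
open scoped NNReal

namespace LasotaYorke

theorem le_ciSup₂_of_bddAbove_image {ι α : Type*} [ConditionallyCompleteLattice α]
    {P : ι → Prop} {g : ι → α} (hg : BddAbove (g '' {i | P i})) {j : ι} (hj : P j) :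
    g j ≤ ⨆ (i) (_ : P i), g i :=
  le_ciSup₂ (f := fun i (_ : P i) => g i) (hg.mono fun x hx => by
    obtain ⟨i, hi, rfl⟩ := by simpa using hx
    exact ⟨i, hi, rfl⟩) j hj

theorem le_ciSup₂_ciSup₂_of_le {ι κ : Type*} {P : ι → Prop} {Q : ι → κ → Prop}
    {g : ι → κ → ℝ} {C : ℝ} (hC : 0 ≤ C) (hg : ∀ i, P i → ∀ x, Q i x → g i x ≤ C) {j : ι}
    {y : κ} (hj : P j) (hy : Q j y) :
    g j y ≤ ⨆ (i) (_ : P i), ⨆ (x) (_ : Q i x), g i x := by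
  have hinner : g j y ≤ ⨆ (x) (_ : Q j x), g j x :=
    le_ciSup₂_of_bddAbove_image ⟨C, by rintro _ ⟨x, hx, rfl⟩; exact hg j hj x hx⟩ hy
  refine hinner.trans (le_ciSup₂_of_bddAbove_image (g := fun i => ⨆ (x) (_ : Q i x), g i x)
    ⟨C, ?_⟩ hj)
  rintro _ ⟨i, hi, rfl⟩
  exact Real.iSup_le (fun x => Real.iSup_le (hg i hi x) hC) hC

section Variation

variable {α E : Type*} [LinearOrder α]

theorem Icc_subset_Icc_of_monotoneOn_Iic {v : ℕ → α} {n i : ℕ} (hv : MonotoneOn v (Iic n))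
    (hi : i < n) : Icc (v i) (v (i + 1)) ⊆ Icc (v 0) (v n) :=
  Icc_subset_Icc (hv (by simp) (by simp [hi.le]) i.zero_le) (hv (by simp [hi]) (by simp) hi)

theorem eVariationOn_Icc_add_Icc [PseudoEMetricSpace E] (f : α → E) {a b c : α} (hab : a ≤ b)
    (hbc : b ≤ c) :
    eVariationOn f (Icc a b) + eVariationOn f (Icc b c) = eVariationOn f (Icc a c) := by
  simpa using eVariationOn.Icc_add_Icc f hab hbc (mem_univ b)

theorem eVariationOn_le_edist_of_isLowerSet [PseudoEMetricSpace E] {φ : α → E} {s t : Set α}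
    {e₁ e₂ : E} (ht : IsLowerSet t) (h₁ : ∀ x ∈ s, x ∈ t → φ x = e₁)
    (h₂ : ∀ x ∈ s, x ∉ t → φ x = e₂) :
    eVariationOn φ s ≤ edist e₁ e₂ := by
  classical
  let κ : α → Bool := fun x => decide (x ∉ t)
  let g : Bool → E := fun b => cond b e₂ e₁
  have hκ : Monotone κ := fun x y hxy => by
    by_cases hy : y ∈ t
    · simp [κ, hy, ht hxy hy]
    · simp [κ, hy]
  calc eVariationOn φ s = eVariationOn (g ∘ κ) s :=
        eVariationOn.eq_of_eqOn fun x hx => by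
          by_cases hxt : x ∈ t <;> simp [g, κ, hxt, h₁ x hx, h₂ x hx]
    _ ≤ eVariationOn g {false, true} :=
        eVariationOn.comp_le_of_monotoneOn g κ (hκ.monotoneOn s) fun x _ => by simp
    _ = edist e₁ e₂ := eVariationOn.pair g false true

theorem eVariationOn_add_le [SeminormedAddCommGroup E] (f g : α → E) (s : Set α) :
    eVariationOn (f + g) s ≤ eVariationOn f s + eVariationOn g s := by
  refine iSup_le fun ⟨n, u, hu, us⟩ => ?_
  calc ∑ i ∈ Finset.range n, edist ((f + g) (u (i + 1))) ((f + g) (u i))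
      ≤ ∑ i ∈ Finset.range n,
          (edist (f (u (i + 1))) (f (u i)) + edist (g (u (i + 1))) (g (u i))) :=
        Finset.sum_le_sum fun i _ => edist_add_add_le _ _ _ _
    _ ≤ eVariationOn f s + eVariationOn g s := by
        rw [Finset.sum_add_distrib]
        exact add_le_add (eVariationOn.sum_le hu us) (eVariationOn.sum_le hu us)

theorem eVariationOn_sum_le [SeminormedAddCommGroup E] {ι : Type*} (F : ι → α → E) (s : Set α)
    (t : Finset ι) :
    eVariationOn (fun x => ∑ i ∈ t, F i x) s ≤ ∑ i ∈ t, eVariationOn (F i) s := by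
  have h0 : eVariationOn (0 : α → E) s = 0 :=
    eVariationOn.constant_on (subsingleton_singleton.anti (by rintro _ ⟨_, _, rfl⟩; rfl))
  simpa [Finset.sum_fn] using
    Finset.le_sum_of_subadditive (fun φ : α → E => eVariationOn φ s) h0.le
      (fun φ ψ => eVariationOn_add_le φ ψ s) t F

theorem sum_eVariationOn_Icc [PseudoEMetricSpace E] (f : α → E) {v : ℕ → α} {n : ℕ}
    (hv : MonotoneOn v (Iic n)) :
    ∑ i ∈ Finset.range n, eVariationOn f (Icc (v i) (v (i + 1))) =
      eVariationOn f (Icc (v 0) (v n)) := by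
  induction n with
  | zero => simp
  | succ n ih =>
    rw [Finset.sum_range_succ, ih (hv.mono (Iic_subset_Iic.2 n.le_succ)),
      eVariationOn_Icc_add_Icc f (hv (by simp) (by simp) n.zero_le)
        (hv (by simp) (by simp) n.le_succ)]

end Variation

theorem sum_toReal_eVariationOn_Icc {f : ℝ → ℝ} {v : ℕ → ℝ} {n : ℕ} (hv : MonotoneOn v (Iic n))
    (hf : BoundedVariationOn f (Icc (v 0) (v n))) :
    ∑ i ∈ Finset.range n, (eVariationOn f (Icc (v i) (v (i + 1)))).toReal =
      (eVariationOn f (Icc (v 0) (v n))).toReal := by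
  rw [← ENNReal.toReal_sum, sum_eVariationOn_Icc f hv]
  exact fun i hi => ne_top_of_le_ne_top hf <| eVariationOn.mono f <|
    Icc_subset_Icc_of_monotoneOn_Iic hv (Finset.mem_range.1 hi)

theorem sum_setIntegral_Icc {g : ℝ → ℝ} {v : ℕ → ℝ} {n : ℕ} (hv : MonotoneOn v (Iic n))
    (hg : IntegrableOn g (Icc (v 0) (v n))) :
    ∑ i ∈ Finset.range n, ∫ t in Icc (v i) (v (i + 1)), g t = ∫ t in Icc (v 0) (v n), g t := by
  have hIcc : ∀ {x y : ℝ}, x ≤ y → ∫ t in Icc x y, g t = ∫ t in x..y, g t := fun h => by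
    rw [intervalIntegral.integral_of_le h, integral_Icc_eq_integral_Ioc]
  have hstep : ∀ i < n, v i ≤ v (i + 1) := fun i hi =>
    hv (by simp [hi.le]) (by simp [hi]) i.le_succ
  rw [Finset.sum_congr rfl fun i hi => hIcc (hstep i (Finset.mem_range.1 hi)),
    hIcc (hv (by simp) (by simp) n.zero_le)]
  refine intervalIntegral.sum_integral_adjacent_intervals fun i hi => ?_
  exact (intervalIntegrable_iff_integrableOn_Icc_of_le (hstep i hi)).2
    (hg.mono_set (Icc_subset_Icc_of_monotoneOn_Iic hv hi))

theorem eVariationOn_Icc_le_of_eqOn_Ico {φ : ℝ → ℝ} {a b : ℝ} (h : EqOn φ 0 (Ico a b)) :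
    eVariationOn φ (Icc a b) ≤ ENNReal.ofReal |φ b| := by
  refine (eVariationOn_le_edist_of_isLowerSet (isLowerSet_Iio b) (e₁ := 0) (e₂ := φ b)
    (fun x hx hxb => h ⟨hx.1, hxb⟩) fun x hx hxb => ?_).trans_eq ?_
  · rw [le_antisymm hx.2 (not_lt.1 hxb)]
  · rw [edist_comm, edist_zero_right, Real.enorm_eq_ofReal_abs]

theorem eVariationOn_Icc_le_of_eqOn_Ioc {φ : ℝ → ℝ} {a b : ℝ} (h : EqOn φ 0 (Ioc a b)) :
    eVariationOn φ (Icc a b) ≤ ENNReal.ofReal |φ a| := by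
  refine (eVariationOn_le_edist_of_isLowerSet (isLowerSet_Iic a) (e₁ := φ a) (e₂ := 0)
    (fun x hx hxa => ?_) fun x hx hxa => h ⟨not_le.1 hxa, hx.2⟩).trans_eq ?_
  · rw [le_antisymm hxa hx.1]
  · rw [edist_zero_right, Real.enorm_eq_ofReal_abs]

theorem eVariationOn_Icc_le_of_eqOn_Ioo {φ : ℝ → ℝ} {a b : ℝ} (h : EqOn φ 0 (Ioo a b)) :
    eVariationOn φ (Icc a b) ≤ ENNReal.ofReal |φ a| + ENNReal.ofReal |φ b| := by
  rcases le_or_gt b a with hba | hab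
  · simp [eVariationOn.subsingleton φ (subsingleton_Icc_of_ge hba)]
  have ham : a < (a + b) / 2 := left_lt_add_div_two.2 hab
  have hmb : (a + b) / 2 < b := add_div_two_lt_right.2 hab
  rw [← eVariationOn_Icc_add_Icc φ ham.le hmb.le]
  exact add_le_add (eVariationOn_Icc_le_of_eqOn_Ioc fun x hx => h ⟨hx.1, hx.2.trans_lt hmb⟩)
    (eVariationOn_Icc_le_of_eqOn_Ico fun x hx => h ⟨ham.trans_le hx.1, hx.2⟩)

theorem eVariationOn_indicator_le {S : Set ℝ} {H : ℝ → ℝ} {lo c d hi : ℝ} (hlo : lo ≤ c)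
    (hcd : c ≤ d) (hhi : d ≤ hi) (hS : Ioo c d ⊆ S) (hS' : S ⊆ Icc c d) :
    eVariationOn (S.indicator H) (Icc lo hi) ≤
      ENNReal.ofReal |H c| + eVariationOn H (Icc c d) + ENNReal.ofReal |H d| := by
  set g := S.indicator H
  have hout : ∀ x ∉ Icc c d, g x = 0 := fun x hx => indicator_of_notMem (fun h => hx (hS' h)) H
  have hend : ∀ x, ENNReal.ofReal |g x| + ENNReal.ofReal |g x - H x| = ENNReal.ofReal |H x| := by
    intro x
    by_cases hx : x ∈ S <;> simp [g, hx]
  have hleft : eVariationOn g (Icc lo c) ≤ ENNReal.ofReal |g c| :=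
    eVariationOn_Icc_le_of_eqOn_Ico fun x hx => hout x fun h => (not_le.2 hx.2) h.1
  have hright : eVariationOn g (Icc d hi) ≤ ENNReal.ofReal |g d| :=
    eVariationOn_Icc_le_of_eqOn_Ioc fun x hx => hout x fun h => (not_le.2 hx.1) h.2
  have hmid : eVariationOn g (Icc c d) ≤
      eVariationOn H (Icc c d) + (ENNReal.ofReal |g c - H c| + ENNReal.ofReal |g d - H d|) := by
    calc eVariationOn g (Icc c d) = eVariationOn (H + (g - H)) (Icc c d) := by simp
      _ ≤ _ := (eVariationOn_add_le _ _ _).trans <| add_le_add le_rfl <|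
          eVariationOn_Icc_le_of_eqOn_Ioo fun x hx => by simp [g, indicator_of_mem (hS hx)]
  rw [← eVariationOn_Icc_add_Icc g (hlo.trans hcd) hhi, ← eVariationOn_Icc_add_Icc g hlo hcd,
    ← hend c, ← hend d]
  calc _ ≤ ENNReal.ofReal |g c| + (eVariationOn H (Icc c d) + (ENNReal.ofReal |g c - H c| +
          ENNReal.ofReal |g d - H d|)) + ENNReal.ofReal |g d| :=
        add_le_add (add_le_add hleft hmid) hright
    _ = _ := by ring

theorem eVariationOn_indicator_image_Ico_le {T S h : ℝ → ℝ} {p q lo hi : ℝ} (hpq : p ≤ q)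
    (hT : ContinuousOn T (Icc p q)) (hinj : InjOn T (Icc p q)) (hS : LeftInvOn S T (Icc p q))
    (hmaps : MapsTo T (Icc p q) (Icc lo hi)) :
    eVariationOn ((T '' Ico p q).indicator fun y => h (S y)) (Icc lo hi) ≤
      ENNReal.ofReal |h p| + eVariationOn h (Icc p q) + ENNReal.ofReal |h q| := by
  have hp : p ∈ Icc p q := left_mem_Icc.2 hpq
  have hq : q ∈ Icc p q := right_mem_Icc.2 hpq
  have hcomp : EqOn ((fun y => h (S y)) ∘ T) h (Icc p q) := fun x hx => by simp [hS hx]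
  rcases hT.strictMonoOn_of_injOn_Icc' hpq hinj with hmono | hanti
  · have hvar : eVariationOn (fun y => h (S y)) (Icc (T p) (T q)) =
        eVariationOn h (Icc p q) := by
      rw [← hT.image_Icc_of_monotoneOn hpq hmono.monotoneOn,
        ← eVariationOn.comp_eq_of_monotoneOn _ T hmono.monotoneOn, eVariationOn.eq_of_eqOn hcomp]
    rw [hT.image_Ico_of_strictMonoOn hpq hmono]
    refine (eVariationOn_indicator_le (hmaps hp).1 (hmono.monotoneOn hp hq hpq) (hmaps hq).2
      Ioo_subset_Ico_self Ico_subset_Icc_self).trans_eq ?_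
    rw [hvar, hS hp, hS hq]
  · have hvar : eVariationOn (fun y => h (S y)) (Icc (T q) (T p)) =
        eVariationOn h (Icc p q) := by
      rw [← hT.image_Icc_of_antitoneOn hpq hanti.antitoneOn,
        ← eVariationOn.comp_eq_of_antitoneOn _ T hanti.antitoneOn, eVariationOn.eq_of_eqOn hcomp]
    rw [hT.image_Ico_of_strictAntiOn hpq hanti]
    refine (eVariationOn_indicator_le (hmaps hq).1 (hanti.antitoneOn hp hq hpq) (hmaps hp).2
      Ioo_subset_Ioc_self Ioc_subset_Icc_self).trans_eq ?_
    rw [hvar, hS hp, hS hq, add_comm, add_comm (ENNReal.ofReal |h q|), add_assoc]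

theorem abs_sub_add_abs_sub_le_eVariationOn {f : ℝ → ℝ} {p q t : ℝ} (ht : t ∈ Icc p q)
    (hf : BoundedVariationOn f (Icc p q)) :
    |f p - f t| + |f t - f q| ≤ (eVariationOn f (Icc p q)).toReal := by
  have h : edist (f p) (f t) + edist (f t) (f q) ≤ eVariationOn f (Icc p q) := by
    rw [← eVariationOn_Icc_add_Icc f ht.1 ht.2]
    exact add_le_add (eVariationOn.edist_le f (left_mem_Icc.2 ht.1) (right_mem_Icc.2 ht.1))
      (eVariationOn.edist_le f (left_mem_Icc.2 ht.2) (right_mem_Icc.2 ht.2))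
  rw [edist_dist, edist_dist, Real.dist_eq, Real.dist_eq,
    ← ENNReal.ofReal_add (abs_nonneg _) (abs_nonneg _)] at h
  exact (ENNReal.ofReal_le_iff_le_toReal hf).1 h

theorem mul_sub_le_setIntegral_add {g : ℝ → ℝ} {x y c V : ℝ} (hxy : x ≤ y)
    (hg : IntegrableOn g (Icc x y)) (h : ∀ t ∈ Icc x y, c ≤ g t + V) :
    c * (y - x) ≤ (∫ t in Icc x y, g t) + V * (y - x) := by
  have hV : IntegrableOn (fun _ => V) (Icc x y) := integrableOn_const measure_Icc_lt_top.ne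
  have := setIntegral_ge_of_const_le measurableSet_Icc measure_Icc_lt_top.ne h (hg.add hV)
  rwa [integral_add hg hV, setIntegral_const, Real.volume_real_Icc_of_le hxy,
    smul_eq_mul, smul_eq_mul, mul_comm, mul_comm _ V] at this

theorem abs_add_abs_le_of_boundedVariationOn {f : ℝ → ℝ} {p q : ℝ} (hpq : p < q)
    (hf : BoundedVariationOn f (Icc p q)) (hfi : IntegrableOn f (Icc p q)) :
    |f p| + |f q| ≤ (eVariationOn f (Icc p q)).toReal + 2 / (q - p) * ∫ t in Icc p q, |f t| := by
  have hqp : 0 < q - p := sub_pos.2 hpq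
  have h := mul_sub_le_setIntegral_add (c := |f p| + |f q|)
      (V := (eVariationOn f (Icc p q)).toReal) hpq.le (hfi.abs.const_mul 2) fun t ht => by
    have := abs_sub_add_abs_sub_le_eVariationOn ht hf
    have h₁ := abs_sub_abs_le_abs_sub (f p) (f t)
    have h₂ := abs_sub_abs_le_abs_sub (f q) (f t)
    rw [abs_sub_comm (f q)] at h₂
    linarith
  rw [integral_const_mul] at h
  calc |f p| + |f q| = (|f p| + |f q|) * (q - p) / (q - p) := by field_simp
    _ ≤ (2 * (∫ t in Icc p q, |f t|) + (eVariationOn f (Icc p q)).toReal * (q - p)) /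
          (q - p) := by gcongr
    _ = _ := by field_simp; ring

theorem abs_mul_sub_le_setIntegral_add {f : ℝ → ℝ} {x y z : ℝ} (hz : z ∈ Icc x y)
    (hf : BoundedVariationOn f (Icc x y)) (hfi : IntegrableOn f (Icc x y)) :
    |f z| * (y - x) ≤ (∫ t in Icc x y, |f t|) + (eVariationOn f (Icc x y)).toReal * (y - x) :=
  mul_sub_le_setIntegral_add (hz.1.trans hz.2) hfi.abs fun t ht => by
    have := hf.dist_le hz ht
    rw [Real.dist_eq] at this
    linarith [abs_sub_abs_le_abs_sub (f z) (f t)]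

section Product

variable {f w : ℝ → ℝ} {s : ℝ} {K : ℝ≥0}

theorem abs_mul_sub_mul_le_add_length_mul {x y : ℝ} (hxy : x ≤ y)
    (hw : ∀ t ∈ Icc x y, |w t| ≤ s) (hwl : LipschitzOnWith K w (Icc x y))
    (hf : BoundedVariationOn f (Icc x y)) (hfi : IntegrableOn f (Icc x y)) :
    |f y * w y - f x * w x| ≤ s * (eVariationOn f (Icc x y)).toReal +
      K * ((∫ t in Icc x y, |f t|) + (eVariationOn f (Icc x y)).toReal * (y - x)) := by
  have hx : x ∈ Icc x y := left_mem_Icc.2 hxy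
  have hy : y ∈ Icc x y := right_mem_Icc.2 hxy
  have hs : 0 ≤ s := (abs_nonneg _).trans (hw x hx)
  have hΔf : |f y - f x| ≤ (eVariationOn f (Icc x y)).toReal := by
    simpa [Real.dist_eq] using hf.dist_le hy hx
  have hΔw : |w y - w x| ≤ K * (y - x) := by
    simpa [Real.dist_eq, abs_of_nonneg (sub_nonneg.2 hxy)] using hwl.dist_le_mul y hy x hx
  calc |f y * w y - f x * w x| = |w y * (f y - f x) + f x * (w y - w x)| := by ring_nf
    _ ≤ |w y| * |f y - f x| + |f x| * |w y - w x| := by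
        rw [← abs_mul, ← abs_mul]
        exact abs_add_le _ _
    _ ≤ s * (eVariationOn f (Icc x y)).toReal + |f x| * (K * (y - x)) := by
        gcongr
        exact hw y hy
    _ = s * (eVariationOn f (Icc x y)).toReal + K * (|f x| * (y - x)) := by ring
    _ ≤ _ := by grw [abs_mul_sub_le_setIntegral_add hx hf hfi]

theorem abs_mul_sub_mul_le_add_mesh_mul {v : ℕ → ℝ} {n : ℕ} {x y δ : ℝ}
    (hv : MonotoneOn v (Iic n)) (hv0 : v 0 = x) (hvn : v n = y)
    (hδ : ∀ i < n, v (i + 1) - v i ≤ δ) (hw : ∀ t ∈ Icc x y, |w t| ≤ s)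
    (hwl : LipschitzOnWith K w (Icc x y)) (hf : BoundedVariationOn f (Icc x y))
    (hfi : IntegrableOn f (Icc x y)) :
    |f y * w y - f x * w x| ≤ s * (eVariationOn f (Icc x y)).toReal +
      K * (∫ t in Icc x y, |f t|) + K * δ * (eVariationOn f (Icc x y)).toReal := by
  subst hv0 hvn
  set V : ℕ → ℝ := fun i => (eVariationOn f (Icc (v i) (v (i + 1)))).toReal
  set I : ℕ → ℝ := fun i => ∫ t in Icc (v i) (v (i + 1)), |f t|
  calc |f (v n) * w (v n) - f (v 0) * w (v 0)|
      = |∑ i ∈ Finset.range n, (f (v (i + 1)) * w (v (i + 1)) - f (v i) * w (v i))| := by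
        rw [Finset.sum_range_sub (fun i => f (v i) * w (v i))]
    _ ≤ ∑ i ∈ Finset.range n, |f (v (i + 1)) * w (v (i + 1)) - f (v i) * w (v i)| :=
        Finset.abs_sum_le_sum_abs _ _
    _ ≤ ∑ i ∈ Finset.range n, (s * V i + K * (I i + V i * (v (i + 1) - v i))) := by
        refine Finset.sum_le_sum fun i hi => ?_
        have hi := Finset.mem_range.1 hi
        have hsub := Icc_subset_Icc_of_monotoneOn_Iic hv hi
        exact abs_mul_sub_mul_le_add_length_mul (hv (by simp [hi.le]) (by simp [hi]) i.le_succ)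
          (fun t ht => hw t (hsub ht)) (hwl.mono hsub) (hf.mono hsub) (hfi.mono_set hsub)
    _ ≤ ∑ i ∈ Finset.range n, (s * V i + K * I i + K * δ * V i) := by
        refine Finset.sum_le_sum fun i hi => ?_
        have hV : 0 ≤ V i := ENNReal.toReal_nonneg
        have := mul_le_mul_of_nonneg_left (hδ i (Finset.mem_range.1 hi)) hV
        nlinarith
    _ = s * ∑ i ∈ Finset.range n, V i + K * ∑ i ∈ Finset.range n, I i +
          K * δ * ∑ i ∈ Finset.range n, V i := by
        simp only [Finset.sum_add_distrib, Finset.mul_sum]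
    _ = _ := by rw [sum_toReal_eVariationOn_Icc hv hf, sum_setIntegral_Icc hv hfi.abs]

theorem abs_mul_sub_mul_le {x y : ℝ} (hxy : x ≤ y) (hw : ∀ t ∈ Icc x y, |w t| ≤ s)
    (hwl : LipschitzOnWith K w (Icc x y)) (hf : BoundedVariationOn f (Icc x y))
    (hfi : IntegrableOn f (Icc x y)) :
    |f y * w y - f x * w x| ≤
      s * (eVariationOn f (Icc x y)).toReal + K * ∫ t in Icc x y, |f t| := by
  set V := (eVariationOn f (Icc x y)).toReal
  set I := ∫ t in Icc x y, |f t|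
  -- the error term `K δ V` of a subdivision of mesh `δ = (y - x) / M` vanishes as `M → ∞`
  have hlim : Tendsto (fun M : ℕ => s * V + K * I + K * ((y - x) / M) * V) atTop
      (𝓝 (s * V + K * I)) := by
    simpa using (((tendsto_const_div_atTop_nhds_zero_nat (y - x)).const_mul (K : ℝ)).mul_const
      V).const_add (s * V + K * I)
  refine ge_of_tendsto hlim ((eventually_gt_atTop 0).mono fun M hM => ?_)
  have hmono : Monotone fun i : ℕ => x + i * ((y - x) / M) := fun i j hij => by
    have : (i : ℝ) ≤ j := by exact_mod_cast hij
    have : 0 ≤ (y - x) / M := by positivity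
    simp only
    gcongr
  exact abs_mul_sub_mul_le_add_mesh_mul (hmono.monotoneOn _) (by simp) (by field_simp; ring)
    (fun i _ => le_of_eq (by push_cast; ring)) hw hwl hf hfi

theorem eVariationOn_mul_le {a b : ℝ} (hw : ∀ t ∈ Icc a b, |w t| ≤ s)
    (hwl : LipschitzOnWith K w (Icc a b)) (hf : BoundedVariationOn f (Icc a b))
    (hfi : IntegrableOn f (Icc a b)) :
    eVariationOn (fun t => f t * w t) (Icc a b) ≤
      ENNReal.ofReal (s * (eVariationOn f (Icc a b)).toReal + K * ∫ t in Icc a b, |f t|) := by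
  refine iSup_le fun ⟨n, u, hu, us⟩ => ?_
  have hs : 0 ≤ s := (abs_nonneg _).trans (hw _ (us 0))
  have hsub : Icc (u 0) (u n) ⊆ Icc a b := Icc_subset_Icc (us 0).1 (us n).2
  have hcell : ∀ i, Icc (u i) (u (i + 1)) ⊆ Icc a b := fun i =>
    Icc_subset_Icc (us i).1 (us (i + 1)).2
  calc ∑ i ∈ Finset.range n, edist (f (u (i + 1)) * w (u (i + 1))) (f (u i) * w (u i))
      ≤ ∑ i ∈ Finset.range n,
          ENNReal.ofReal (s * (eVariationOn f (Icc (u i) (u (i + 1)))).toReal +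
            K * ∫ t in Icc (u i) (u (i + 1)), |f t|) := by
        refine Finset.sum_le_sum fun i _ => ?_
        rw [edist_dist, Real.dist_eq]
        exact ENNReal.ofReal_le_ofReal <| abs_mul_sub_mul_le (hu i.le_succ)
          (fun t ht => hw t (hcell i ht)) (hwl.mono (hcell i)) (hf.mono (hcell i))
          (hfi.mono_set (hcell i))
    _ = ENNReal.ofReal (∑ i ∈ Finset.range n,
          (s * (eVariationOn f (Icc (u i) (u (i + 1)))).toReal +
            K * ∫ t in Icc (u i) (u (i + 1)), |f t|)) :=
        (ENNReal.ofReal_sum_of_nonneg fun i _ => by positivity).symm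
    _ ≤ _ := by
        rw [Finset.sum_add_distrib, ← Finset.mul_sum, ← Finset.mul_sum,
          sum_toReal_eVariationOn_Icc (hu.monotoneOn _) (hf.mono hsub),
          sum_setIntegral_Icc (hu.monotoneOn _) (hfi.mono_set hsub).abs]
        exact ENNReal.ofReal_le_ofReal <| add_le_add
          (mul_le_mul_of_nonneg_left (ENNReal.toReal_mono hf (eVariationOn.mono f hsub)) hs)
          (mul_le_mul_of_nonneg_left (setIntegral_mono_set hfi.abs
            (.of_forall fun _ => abs_nonneg _) hsub.eventuallyLE) K.2)

end Product

theorem mapsTo_Icc_of_mapsTo_Ico {T : ℝ → ℝ} {p q : ℝ} {t : Set ℝ} (hpq : p < q)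
    (hT : ContinuousOn T (Icc p q)) (ht : IsClosed t) (h : MapsTo T (Ico p q) t) :
    MapsTo T (Icc p q) t := by
  rw [← closure_Ico hpq.ne] at hT ⊢
  simpa [ht.closure_eq] using h.closure_of_continuousOn hT

theorem eVariationOn_indicator_image_mul_le {T S f w : ℝ → ℝ} {p q lo hi s : ℝ} {K : ℝ≥0}
    (hpq : p < q) (hT : ContinuousOn T (Icc p q)) (hinj : InjOn T (Icc p q))
    (hS : LeftInvOn S T (Icc p q)) (hmaps : MapsTo T (Ico p q) (Icc lo hi))
    (hw : ∀ x ∈ Icc p q, |w x| ≤ s) (hs : s ≤ 1) (hwl : LipschitzOnWith K w (Icc p q))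
    (hf : BoundedVariationOn f (Icc p q)) (hfi : IntegrableOn f (Icc p q)) :
    eVariationOn ((T '' Ico p q).indicator fun y => f (S y) * w (S y)) (Icc lo hi) ≤
      ENNReal.ofReal (2 * s * (eVariationOn f (Icc p q)).toReal +
        (K + 2 / (q - p)) * ∫ t in Icc p q, |f t|) := by
  set V := (eVariationOn f (Icc p q)).toReal
  set I := ∫ t in Icc p q, |f t|
  have hp : p ∈ Icc p q := left_mem_Icc.2 hpq.le
  have hq : q ∈ Icc p q := right_mem_Icc.2 hpq.le
  have hs0 : 0 ≤ s := (abs_nonneg _).trans (hw p hp)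
  have hI : 0 ≤ I := setIntegral_nonneg measurableSet_Icc fun _ _ => abs_nonneg _
  have hends : |f p * w p| + |f q * w q| ≤ s * V + 2 / (q - p) * I := by
    have hqp : 0 ≤ 2 / (q - p) * I := mul_nonneg (div_nonneg zero_le_two (sub_pos.2 hpq).le) hI
    calc |f p * w p| + |f q * w q| ≤ s * (|f p| + |f q|) := by
          rw [abs_mul, abs_mul]
          nlinarith [hw p hp, hw q hq, abs_nonneg (f p), abs_nonneg (f q)]
      _ ≤ s * (V + 2 / (q - p) * I) :=
          mul_le_mul_of_nonneg_left (abs_add_abs_le_of_boundedVariationOn hpq hf hfi) hs0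
      _ ≤ s * V + 2 / (q - p) * I := by nlinarith
  have hsum : 0 ≤ s * V + K * I :=
    add_nonneg (mul_nonneg hs0 ENNReal.toReal_nonneg) (mul_nonneg K.2 hI)
  calc _ ≤ ENNReal.ofReal |f p * w p| + eVariationOn (fun t => f t * w t) (Icc p q) +
        ENNReal.ofReal |f q * w q| :=
        eVariationOn_indicator_image_Ico_le (h := fun t => f t * w t) hpq.le hT hinj hS
          (mapsTo_Icc_of_mapsTo_Ico hpq hT isClosed_Icc hmaps)
    _ ≤ ENNReal.ofReal |f p * w p| + ENNReal.ofReal (s * V + K * I) +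
          ENNReal.ofReal |f q * w q| := by
        gcongr
        exact eVariationOn_mul_le hw hwl hf hfi
    _ = ENNReal.ofReal (|f p * w p| + (s * V + K * I) + |f q * w q|) := by
        rw [← ENNReal.ofReal_add (abs_nonneg _) hsum, ← ENNReal.ofReal_add (by positivity)]
        positivity
    _ ≤ _ := ENNReal.ofReal_le_ofReal (by linarith)

theorem lipschitzOnWith_inv_abs {φ : ℝ → ℝ} {s : Set ℝ} {K : ℝ≥0} (hs : Convex ℝ s)
    (hφ : DifferentiableOn ℝ φ s) (hne : ∀ x ∈ s, φ x ≠ 0)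
    (hK : ∀ x ∈ s, |derivWithin φ s x / φ x ^ 2| ≤ K) :
    LipschitzOnWith K (fun x => |φ x|⁻¹) s := by
  have hinv : LipschitzOnWith K (fun x => (φ x)⁻¹) s :=
    hs.lipschitzOnWith_of_nnnorm_hasDerivWithin_le
      (fun x hx => (hφ x hx).hasDerivWithinAt.inv (hne x hx)) fun x hx => by
        rw [← NNReal.coe_le_coe, coe_nnnorm, Real.norm_eq_abs, neg_div, abs_neg]
        exact hK x hx
  simpa [Function.comp_def, abs_inv] using
    (lipschitzWith_one_norm (E := ℝ)).comp_lipschitzOnWith hinv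

theorem eVariationOn_indicator_image_div_le {T S f : ℝ → ℝ} {p q lo hi A B D : ℝ} (hpq : p < q)
    (hT : ContDiffOn ℝ 2 T (Icc p q)) (hinj : InjOn T (Icc p q)) (hS : LeftInvOn S T (Icc p q))
    (hmaps : MapsTo T (Ico p q) (Icc lo hi))
    (hexp : ∀ x ∈ Icc p q, 2 < |derivWithin T (Icc p q) x|)
    (hA : ∀ x ∈ Icc p q, 2 / |derivWithin T (Icc p q) x| ≤ A)
    (hdist : ∀ x ∈ Icc p q, |derivWithin (derivWithin T (Icc p q)) (Icc p q) x /
      (derivWithin T (Icc p q) x) ^ 2| ≤ D) (hB : D + 2 / (q - p) ≤ B)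
    (hf : BoundedVariationOn f (Icc p q)) (hfi : IntegrableOn f (Icc p q)) :
    eVariationOn ((T '' Ico p q).indicator fun y => f (S y) / |derivWithin T (Icc p q) (S y)|)
        (Icc lo hi) ≤
      ENNReal.ofReal (A * (eVariationOn f (Icc p q)).toReal + B * ∫ t in Icc p q, |f t|) := by
  set φ := derivWithin T (Icc p q)
  have hφ : DifferentiableOn ℝ φ (Icc p q) :=
    (hT.derivWithin (m := 1) (uniqueDiffOn_Icc hpq) (by norm_num)).differentiableOn (by norm_num)
  have hD : 0 ≤ D := (abs_nonneg _).trans (hdist p (left_mem_Icc.2 hpq.le))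
  have hw : ∀ x ∈ Icc p q, |(|φ x|⁻¹)| ≤ min (A / 2) 1 := fun x hx => by
    have h2 := hexp x hx
    have hA' := hA x hx
    rw [div_eq_mul_inv] at hA'
    rw [abs_inv, abs_abs]
    exact le_min (by linarith) (inv_le_one_of_one_le₀ (by linarith))
  have hne : ∀ x ∈ Icc p q, φ x ≠ 0 := fun x hx h => by
    have := hexp x hx
    rw [h, abs_zero] at this
    linarith
  have hwl := lipschitzOnWith_inv_abs (K := D.toNNReal) (convex_Icc p q) hφ hne
    fun x hx => (hdist x hx).trans (Real.le_coe_toNNReal D)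
  have hdiv : (fun y => f (S y) / |φ (S y)|) = fun y => f (S y) * |φ (S y)|⁻¹ := by
    simp only [div_eq_mul_inv]
  rw [hdiv]
  refine (eVariationOn_indicator_image_mul_le hpq hT.continuousOn hinj hS hmaps hw
    (min_le_right _ _) hwl hf hfi).trans (ENNReal.ofReal_le_ofReal ?_)
  rw [Real.coe_toNNReal D hD]
  have hV : 0 ≤ (eVariationOn f (Icc p q)).toReal := ENNReal.toReal_nonneg
  have hI : 0 ≤ ∫ t in Icc p q, |f t| :=
    setIntegral_nonneg measurableSet_Icc fun _ _ => abs_nonneg _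
  nlinarith [min_le_left (A / 2) 1]

theorem eVariationOn_sum_le_of_partition {a : ℕ → ℝ} {b : ℕ} {g : ℕ → ℝ → ℝ} {f : ℝ → ℝ}
    {s : Set ℝ} {A B : ℝ} (ha : MonotoneOn a (Iic b)) (hA : 0 ≤ A) (hB : 0 ≤ B)
    (hf : BoundedVariationOn f (Icc (a 0) (a b))) (hfi : IntegrableOn f (Icc (a 0) (a b)))
    (hg : ∀ k < b, eVariationOn (g k) s ≤
      ENNReal.ofReal (A * (eVariationOn f (Icc (a k) (a (k + 1)))).toReal +
        B * ∫ t in Icc (a k) (a (k + 1)), |f t|)) :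
    eVariationOn (fun x => ∑ k ∈ Finset.range b, g k x) s ≤
      ENNReal.ofReal (A * (eVariationOn f (Icc (a 0) (a b))).toReal +
        B * ∫ t in Icc (a 0) (a b), |f t|) := by
  calc eVariationOn (fun x => ∑ k ∈ Finset.range b, g k x) s
      ≤ ∑ k ∈ Finset.range b, eVariationOn (g k) s := eVariationOn_sum_le _ _ _
    _ ≤ ∑ k ∈ Finset.range b,
          ENNReal.ofReal (A * (eVariationOn f (Icc (a k) (a (k + 1)))).toReal +
            B * ∫ t in Icc (a k) (a (k + 1)), |f t|) :=
        Finset.sum_le_sum fun k hk => hg k (Finset.mem_range.1 hk)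
    _ = _ := by
        rw [← ENNReal.ofReal_sum_of_nonneg fun k _ => by positivity, Finset.sum_add_distrib,
          ← Finset.mul_sum, ← Finset.mul_sum, sum_toReal_eVariationOn_Icc ha hf,
          sum_setIntegral_Icc ha hfi.abs]

end LasotaYorke

open LasotaYorke

theorem var_L1_lasota_yorke_general
    (b : ℕ) (a : ℕ → ℝ)
    (ha0 : a 0 = 0) (hab : a b = 1)
    (hmono : ∀ k, k < b → a k < a (k + 1))
    (T : ℝ → ℝ) (hT : MapsTo T (Ico 0 1) (Ico 0 1))
    (Tk Sk : ℕ → ℝ → ℝ) (D : ℝ)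
    (hTeq : ∀ k, k < b → ∀ x ∈ Ico (a k) (a (k + 1)), T x = Tk k x)
    (hTkC2 : ∀ k, k < b → ContDiffOn ℝ 2 (Tk k) (Icc (a k) (a (k + 1))))
    (hTkInj : ∀ k, k < b → InjOn (Tk k) (Icc (a k) (a (k + 1))))
    (hTkExp : ∀ k, k < b → ∀ x ∈ Icc (a k) (a (k + 1)),
      2 < |derivWithin (Tk k) (Icc (a k) (a (k + 1))) x|)
    (hTkDist : ∀ k, k < b → ∀ x ∈ Icc (a k) (a (k + 1)),
      |derivWithin (derivWithin (Tk k) (Icc (a k) (a (k + 1)))) (Icc (a k) (a (k + 1))) x /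
        (derivWithin (Tk k) (Icc (a k) (a (k + 1))) x) ^ 2| ≤ D)
    (hSk : ∀ k, k < b → ∀ x ∈ Icc (a k) (a (k + 1)), Sk k (Tk k x) = x)
    (L : (ℝ → ℝ) → ℝ → ℝ)
    (hL : ∀ f x, L f x = ∑ k ∈ Finset.range b,
      (Tk k '' Ico (a k) (a (k + 1))).indicator
        (fun y => f (Sk k y) / |derivWithin (Tk k) (Icc (a k) (a (k + 1))) (Sk k y)|) x)
    (A B : ℝ)
    (hA : A = ⨆ k ∈ Finset.range b, ⨆ x ∈ Icc (a k) (a (k + 1)),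
      2 / |derivWithin (Tk k) (Icc (a k) (a (k + 1))) x|)
    (hB : B = (⨆ k ∈ Finset.range b, 2 / (a (k + 1) - a k)) + D)
    (f : ℝ → ℝ) (hfBV : BoundedVariationOn f (Icc 0 1))
    (hfInt : IntegrableOn f (Icc 0 1)) :
    eVariationOn (L f) (Icc 0 1) ≤
      ENNReal.ofReal (A * (eVariationOn f (Icc 0 1)).toReal +
        B * ∫ x in Icc (0 : ℝ) 1, |f x|) := by
  have ha : MonotoneOn a (Iic b) :=
    (strictMonoOn_Iic_of_lt_succ fun k hk => by simpa using hmono k hk).monotoneOn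
  have hsub : ∀ k < b, Icc (a k) (a (k + 1)) ⊆ Icc 0 1 := fun k hk => by
    simpa only [ha0, hab] using Icc_subset_Icc_of_monotoneOn_Iic ha hk
  have hmaps : ∀ k < b, MapsTo (Tk k) (Ico (a k) (a (k + 1))) (Icc 0 1) := fun k hk x hx => by
    rw [← hTeq k hk x hx]
    exact Ico_subset_Icc_self (hT ⟨(hsub k hk (Ico_subset_Icc_self hx)).1,
      hx.2.trans_le (hsub k hk (right_mem_Icc.2 (hmono k hk).le)).2⟩)
  have hAk : ∀ k < b, ∀ x ∈ Icc (a k) (a (k + 1)),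
      2 / |derivWithin (Tk k) (Icc (a k) (a (k + 1))) x| ≤ A := fun k hk x hx =>
    hA ▸ le_ciSup₂_ciSup₂_of_le zero_le_one
      (fun j hj y hy => (div_le_one (two_pos.trans (hTkExp j (Finset.mem_range.1 hj) y hy))).2
        (hTkExp j (Finset.mem_range.1 hj) y hy).le) (Finset.mem_range.2 hk) hx
  have hBk : ∀ k < b, D + 2 / (a (k + 1) - a k) ≤ B := fun k hk => by
    have := le_ciSup₂_of_bddAbove_image (P := (· ∈ Finset.range b))
      (g := fun j => 2 / (a (j + 1) - a j)) ((Finset.range b).finite_toSet.image _).bddAbove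
      (Finset.mem_range.2 hk)
    rw [hB]
    linarith
  have hb : 0 < b := Nat.pos_of_ne_zero fun h => by
    rw [h, ha0] at hab
    exact zero_ne_one hab
  have hp₀ : a 0 ∈ Icc (a 0) (a 1) := left_mem_Icc.2 (hmono 0 hb).le
  have hA0 : 0 ≤ A := (div_nonneg zero_le_two (abs_nonneg _)).trans (hAk 0 hb _ hp₀)
  have hB0 : 0 ≤ B := (add_nonneg ((abs_nonneg _).trans (hTkDist 0 hb _ hp₀))
    (div_nonneg zero_le_two (sub_pos.2 (hmono 0 hb)).le)).trans (hBk 0 hb)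
  have key := eVariationOn_sum_le_of_partition (s := Icc 0 1) ha hA0 hB0 (by rwa [ha0, hab])
    (by rwa [ha0, hab]) fun k hk =>
      eVariationOn_indicator_image_div_le (hmono k hk) (hTkC2 k hk) (hTkInj k hk) (hSk k hk)
        (hmaps k hk) (hTkExp k hk) (hAk k hk) (hTkDist k hk) (hBk k hk) (hfBV.mono (hsub k hk))
        (hfInt.mono_set (hsub k hk))
  rw [ha0, hab] at key
  rwa [funext (hL f)]

/-- Var–L¹ Lasota–Yorke inequality for a piecewise `C²`, piecewise expanding map of
`[0,1]` with expansion `|T'| > 2` and distortion bounded by `D`: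
`Var(L f) ≤ A Var(f) + B ‖f‖_{L¹}` with `A = sup_x 2/|T'(x)|` and
`B = max_k 2/|P_k| + D`. -/
theorem var_L1_lasota_yorke
    (b : ℕ) (hb : 1 ≤ b) (a : ℕ → ℝ)
    (ha0 : a 0 = 0) (hab : a b = 1)
    (hmono : ∀ k, k < b → a k < a (k + 1))
    (T : ℝ → ℝ) (hT : MapsTo T (Ico 0 1) (Ico 0 1))
    (Tk Sk : ℕ → ℝ → ℝ) (D : ℝ)
    (hTeq : ∀ k, k < b → ∀ x ∈ Ico (a k) (a (k + 1)), T x = Tk k x)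
    (hTkC2 : ∀ k, k < b → ContDiffOn ℝ 2 (Tk k) (Icc (a k) (a (k + 1))))
    (hTkInj : ∀ k, k < b → InjOn (Tk k) (Icc (a k) (a (k + 1))))
    (hTkExp : ∀ k, k < b → ∀ x ∈ Icc (a k) (a (k + 1)),
      2 < |derivWithin (Tk k) (Icc (a k) (a (k + 1))) x|)
    (hTkDist : ∀ k, k < b → ∀ x ∈ Icc (a k) (a (k + 1)),
      |derivWithin (derivWithin (Tk k) (Icc (a k) (a (k + 1)))) (Icc (a k) (a (k + 1))) x /
        (derivWithin (Tk k) (Icc (a k) (a (k + 1))) x) ^ 2| ≤ D)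
    (hSk : ∀ k, k < b → ∀ x ∈ Icc (a k) (a (k + 1)), Sk k (Tk k x) = x)
    (L : (ℝ → ℝ) → ℝ → ℝ)
    (hL : ∀ f x, L f x = ∑ k ∈ Finset.range b,
      (Tk k '' Ico (a k) (a (k + 1))).indicator
        (fun y => f (Sk k y) / |derivWithin (Tk k) (Icc (a k) (a (k + 1))) (Sk k y)|) x)
    (A B : ℝ)
    (hA : A = ⨆ k ∈ Finset.range b, ⨆ x ∈ Icc (a k) (a (k + 1)),
      2 / |derivWithin (Tk k) (Icc (a k) (a (k + 1))) x|)
    (hB : B = (⨆ k ∈ Finset.range b, 2 / (a (k + 1) - a k)) + D)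
    (f : ℝ → ℝ) (hfBV : BoundedVariationOn f (Icc 0 1))
    (hfInt : IntegrableOn f (Icc 0 1)) :
    eVariationOn (L f) (Icc 0 1) ≤
      ENNReal.ofReal (A * (eVariationOn f (Icc 0 1)).toReal +
        B * ∫ x in Icc (0 : ℝ) 1, |f x|) :=
  var_L1_lasota_yorke_general b a ha0 hab hmono T hT Tk Sk D hTeq hTkC2 hTkInj hTkExp hTkDist hSk L
    hL A B hA hB f hfBV hfInt
end

section
/- Let T be a C² map of the circle ℝ/ℤ with |T'(x)| > 1 and |T''(x)/T'(x)²| ≤ D for all x, and let λ = sup_x 1/|T'(x)|. Let L be the transfer operator: (L f)(x) = Σ_{y : T(y) = x} f(y)/|T'(y)| (a finite sum, since T is an expanding covering map of the circle). Then for every Lipschitz function f : ℝ/ℤ → ℝ, Lip(L f) ≤ (2D + 1) λ · Lip(f) + D(D+1) ‖f‖_{L¹}. -/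
open Set MeasureTheory

/-- The least Lipschitz constant of a function `f : ℝ → ℝ`. For a `1`-periodic
function this coincides with the least Lipschitz constant of the induced function
on the circle `ℝ/ℤ` with its standard metric. -/
noncomputable def lipConst (f : ℝ → ℝ) : ℝ :=
  sInf {c | 0 ≤ c ∧ ∀ x y, |f x - f y| ≤ c * |x - y|}

/-!
Replacing `T` by `-T` if necessary (which conjugates `L` by `x ↦ -x`), `T` is an increasing
diffeomorphism of `ℝ` with inverse `S`, and `L f x = ∑_{i < d} f (S (x + i)) g (x + i)` with
`g = S' = 1 / T' ∘ S`. The distortion bound says `|g'| ≤ D g`, and `g ≤ λ`, so for a Lipschitz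
`w` the slope of `L w` is at most `λ Lip(w) L1 + D L|w|`. A function is bounded by its mean over
a period plus its total variation there; since `∫ L1 = 1` and `∫ L|f| = ‖f‖₁`, this gives
`L1 ≤ 1 + D` and `L|f| ≤ (1 + D) ‖f‖₁ + λ Lip(f)`, and the slope bound for `L f` becomes the
claim. As `f` is only Lipschitz, slopes are controlled by two-point estimates with a quadratic
error, which integrate to sharp bounds.
-/

open Filter Topology

theorem abs_sub_le_lipConst_mul {F : ℝ → ℝ}
    (hF : ∃ c : ℝ, 0 ≤ c ∧ ∀ x y, |F x - F y| ≤ c * |x - y|) (x y : ℝ) :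
    |F x - F y| ≤ lipConst F * |x - y| := by
  obtain ⟨c, hc0, hc⟩ := hF
  rcases eq_or_ne x y with rfl | hxy
  · simp
  have hpos : 0 < |x - y| := abs_pos.2 (sub_ne_zero.2 hxy)
  rw [← div_le_iff₀ hpos]
  exact le_csInf ⟨c, hc0, hc⟩ fun b hb => (div_le_iff₀ hpos).2 (hb.2 x y)

theorem lipConst_nonneg (F : ℝ → ℝ) : 0 ≤ lipConst F := by
  rcases eq_empty_or_nonempty {c | 0 ≤ c ∧ ∀ x y, |F x - F y| ≤ c * |x - y|} with h | h
  · rw [lipConst, h, Real.sInf_empty]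
  · exact le_csInf h fun _ hb => hb.1

theorem lipConst_le_of_forall_le {F : ℝ → ℝ} {B : ℝ}
    (h : ∀ v u, v ≤ u → |F u - F v| ≤ B * (u - v)) : lipConst F ≤ B := by
  have hB : 0 ≤ B := by simpa using (abs_nonneg _).trans (h 0 1 zero_le_one)
  refine csInf_le ⟨0, fun _ hc => hc.1⟩ ⟨hB, fun x y => ?_⟩
  rcases le_total y x with hyx | hxy
  · simpa [abs_of_nonneg (sub_nonneg.2 hyx)] using h y x hyx
  · rw [abs_sub_comm, abs_sub_comm x, abs_of_nonneg (sub_nonneg.2 hxy)]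
    exact h x y hxy

theorem lipConst_comp_neg (F : ℝ → ℝ) : lipConst (fun x => F (-x)) = lipConst F := by
  have key : ∀ G : ℝ → ℝ, ∀ c, (∀ x y, |G x - G y| ≤ c * |x - y|) →
      ∀ x y, |G (-x) - G (-y)| ≤ c * |x - y| := fun G c h x y => by
    simpa [neg_add_eq_sub, abs_sub_comm y] using h (-x) (-y)
  unfold lipConst
  congr 1
  ext c
  exact and_congr_right fun _ => ⟨fun h => by simpa using key _ c h, key F c⟩

/-- A derivative-free substitute for `|F'| ≤ φ`, usable when `F` is only Lipschitz. -/
def HasSlopeBound (F φ : ℝ → ℝ) : Prop :=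
  ∃ K : ℝ → ℝ, ∀ v u, v ≤ u → |F u - F v| ≤ φ v * (u - v) + K v * (u - v) ^ 2

namespace HasSlopeBound

variable {F φ : ℝ → ℝ}

theorem mono (h : HasSlopeBound F φ) {ψ : ℝ → ℝ} (hψ : ∀ x, φ x ≤ ψ x) :
    HasSlopeBound F ψ := by
  obtain ⟨K, hK⟩ := h
  exact ⟨K, fun v u hvu => (hK v u hvu).trans (by gcongr; exact hψ v)⟩

theorem comp_add_const (h : HasSlopeBound F φ) (a : ℝ) :
    HasSlopeBound (fun x => F (x + a)) (fun x => φ (x + a)) := by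
  obtain ⟨K, hK⟩ := h
  exact ⟨fun x => K (x + a), fun v u hvu => by
    simpa using hK (v + a) (u + a) (by linarith)⟩

theorem sum {ι : Type*} (s : Finset ι) {F φ : ι → ℝ → ℝ}
    (h : ∀ i, HasSlopeBound (F i) (φ i)) :
    HasSlopeBound (fun x => ∑ i ∈ s, F i x) (fun x => ∑ i ∈ s, φ i x) := by
  choose K hK using h
  refine ⟨fun v => ∑ i ∈ s, K i v, fun v u hvu => ?_⟩
  rw [← Finset.sum_sub_distrib, Finset.sum_mul, Finset.sum_mul, ← Finset.sum_add_distrib]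
  exact (Finset.abs_sum_le_sum_abs _ _).trans (Finset.sum_le_sum fun i _ => hK i v u hvu)

/-- The second order errors vanish in the limit: this is the comparison principle
`image_le_of_liminf_slope_right_le_deriv_boundary`. -/
theorem abs_sub_le_integral (h : HasSlopeBound F φ) (hF : Continuous F) (hφ : Continuous φ)
    {a b : ℝ} (hab : a ≤ b) : |F b - F a| ≤ ∫ t in a..b, φ t := by
  obtain ⟨K, hK⟩ := h
  have hB : ∀ x, HasDerivAt (fun x => ∫ t in a..x, φ t) (φ x) x := fun x =>
    intervalIntegral.integral_hasDerivAt_right (hφ.intervalIntegrable _ _)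
      hφ.aestronglyMeasurable.stronglyMeasurableAtFilter hφ.continuousAt
  refine image_le_of_liminf_slope_right_le_deriv_boundary (f := fun x => |F x - F a|)
    (by fun_prop) (by simp) (fun x _ => (hB x).continuousAt.continuousWithinAt)
    (fun x _ => (hB x).hasDerivWithinAt) (fun x _ r hr => ?_) ⟨hab, le_rfl⟩
  have hlim : Tendsto (fun z => φ x + K x * (z - x)) (𝓝[>] x) (𝓝 (φ x)) := by
    have : Tendsto (fun z => φ x + K x * (z - x)) (𝓝 x) (𝓝 (φ x + K x * (x - x))) :=
      (continuous_const.add (continuous_const.mul (continuous_id.sub continuous_const))).tendsto x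
    simpa using this.mono_left nhdsWithin_le_nhds
  refine (((hlim.eventually (gt_mem_nhds hr))).and self_mem_nhdsWithin).frequently.mono ?_
  rintro z ⟨hzr, hxz : x < z⟩
  have hpos : 0 < z - x := sub_pos.2 hxz
  refine lt_of_le_of_lt ?_ hzr
  rw [slope_def_field, div_le_iff₀ hpos]
  calc |F z - F a| - |F x - F a| ≤ |F z - F x| := by
        simpa using abs_sub_abs_le_abs_sub (F z - F a) (F x - F a)
    _ ≤ φ x * (z - x) + K x * (z - x) ^ 2 := hK x z hxz.le
    _ = (φ x + K x * (z - x)) * (z - x) := by ring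

theorem le_integral_add_integral (h : HasSlopeBound F φ) (hF : Continuous F)
    (hφ : Continuous φ) (hφ0 : ∀ x, 0 ≤ φ x) (x : ℝ) :
    F x ≤ (∫ t in x..x + 1, F t) + ∫ t in x..x + 1, φ t := by
  have hpt : ∀ t ∈ Icc x (x + 1), F x ≤ F t + ∫ s in x..x + 1, φ s := by
    intro t ht
    have hsplit := intervalIntegral.integral_add_adjacent_intervals
      (hφ.intervalIntegrable (μ := volume) x t) (hφ.intervalIntegrable (μ := volume) t (x + 1))
    have htail : 0 ≤ ∫ s in t..x + 1, φ s :=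
      intervalIntegral.integral_nonneg ht.2 fun s _ => hφ0 s
    linarith [(abs_le.1 (h.abs_sub_le_integral hF hφ ht.1)).1]
  have hmono := intervalIntegral.integral_mono_on (μ := volume) (by linarith)
    intervalIntegrable_const ((hF.add continuous_const).intervalIntegrable _ _) hpt
  simpa [intervalIntegral.integral_add (hF.intervalIntegrable _ _) intervalIntegrable_const]
    using hmono

end HasSlopeBound

theorem Function.Periodic.sum_range_add {p : ℝ → ℝ} {d : ℕ} (hp : Function.Periodic p d) :
    Function.Periodic (fun x => ∑ i ∈ Finset.range d, p (x + i)) 1 := by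
  intro x
  have hshift := Finset.sum_range_succ' (fun i : ℕ => p (x + i)) d
  rw [Finset.sum_range_succ, hp x] at hshift
  simpa [add_assoc, add_comm (1 : ℝ)] using hshift.symm

theorem integral_sum_range_add {p : ℝ → ℝ} (hp : Continuous p) (d : ℕ) (x : ℝ) :
    ∫ t in x..x + 1, ∑ i ∈ Finset.range d, p (t + i) = ∫ t in x..x + d, p t := by
  rw [intervalIntegral.integral_finsetSum (f := fun (i : ℕ) t => p (t + i)) fun i _ =>
    (hp.comp (continuous_add_const (i : ℝ))).intervalIntegrable _ _]
  simp_rw [intervalIntegral.integral_comp_add_right]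
  have := intervalIntegral.sum_integral_adjacent_intervals (μ := volume) (f := p)
    (a := fun i : ℕ => x + i) (n := d) fun k _ => hp.intervalIntegrable _ _
  simpa [add_assoc, add_comm (1 : ℝ)] using this

section InverseBranch

variable {S g : ℝ → ℝ}

theorem sub_le_mul_sub_of_hasDerivAt_le (hS : ∀ u, HasDerivAt S (g u) u) {v u M : ℝ}
    (hvu : v ≤ u) (hg : ∀ t ∈ Icc v u, g t ≤ M) : S u - S v ≤ M * (u - v) :=
  (convex_Icc v u).image_sub_le_mul_sub_of_deriv_le
    (fun t _ => (hS t).continuousAt.continuousWithinAt)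
    (fun t _ => (hS t).differentiableAt.differentiableWithinAt)
    (fun t ht => (hS t).deriv ▸ hg t (interior_subset ht)) v (left_mem_Icc.2 hvu) u
    (right_mem_Icc.2 hvu) hvu

/-- The transfer operator written in the coordinates of an inverse branch `S` of a degree `d`
circle map, with `g = S'`. -/
def branchSum (S g w : ℝ → ℝ) (d : ℕ) (x : ℝ) : ℝ :=
  ∑ i ∈ Finset.range d, w (S (x + i)) * g (x + i)

theorem branchSum_nonneg (hg : ∀ u, 0 ≤ g u) {w : ℝ → ℝ} (hw : ∀ y, 0 ≤ w y) (d : ℕ)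
    (x : ℝ) : 0 ≤ branchSum S g w d x :=
  Finset.sum_nonneg fun _ _ => mul_nonneg (hw _) (hg _)

variable (hS : ∀ u, HasDerivAt S (g u) u)
include hS

theorem continuous_branchSum (hg : Continuous g) {w : ℝ → ℝ} (hw : Continuous w) (d : ℕ) :
    Continuous (branchSum S g w d) := by
  have hSc : Continuous S := continuous_iff_continuousAt.2 fun u => (hS u).continuousAt
  exact continuous_finsetSum _ fun i _ => by fun_prop

section Periodic

variable {d : ℕ} (hSd : ∀ u, S (u + d) = S u + 1)
include hSd

theorem periodic_branchSum {w : ℝ → ℝ} (hw : Function.Periodic w 1) :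
    Function.Periodic (branchSum S g w d) 1 := by
  have hg : ∀ u, g (u + d) = g u := fun u => by
    have h := (hS (u + d)).comp_add_const u d
    simp only [hSd] at h
    exact h.unique ((hS u).add_const 1)
  exact Function.Periodic.sum_range_add (p := fun u => w (S u) * g u) fun u => by
    simp only [hSd, hw (S u), hg]

theorem integral_branchSum (hg : Continuous g) {w : ℝ → ℝ} (hw : Continuous w) (x : ℝ) :
    ∫ t in x..x + 1, branchSum S g w d t = ∫ t in S x..S x + 1, w t := by
  have hSc : Continuous S := continuous_iff_continuousAt.2 fun u => (hS u).continuousAt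
  unfold branchSum
  rw [integral_sum_range_add (p := fun u => w (S u) * g u) (by fun_prop), ← hSd x]
  exact intervalIntegral.integral_comp_mul_deriv (fun u _ => hS u) hg.continuousOn hw

end Periodic

variable {lam D : ℝ} (hg0 : ∀ u, 0 < g u) (hgl : ∀ u, g u ≤ lam)
  (hgD : ∀ a b, |g a - g b| ≤ D * |S a - S b|) (hD : 0 ≤ D)
include hg0 hgl hgD hD

theorem hasSlopeBound_comp_mul {w : ℝ → ℝ} {c : ℝ} (hc : 0 ≤ c)
    (hw : ∀ a b, |w a - w b| ≤ c * |a - b|) :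
    HasSlopeBound (fun u => w (S u) * g u) (fun u => (c * lam + D * |w (S u)|) * g u) := by
  have hlam : 0 ≤ lam := (hg0 0).le.trans (hgl 0)
  have hSmono : Monotone S := (strictMono_of_hasDerivAt_pos hS hg0).monotone
  have hSlip : ∀ v u, v ≤ u → S u - S v ≤ lam * (u - v) := fun v u hvu =>
    sub_le_mul_sub_of_hasDerivAt_le hS hvu fun t _ => hgl t
  have hgdist : ∀ v u, v ≤ u → g u ≤ g v + D * lam * (u - v) := fun v u hvu => by
    have h := (abs_le.1 (hgD u v)).2
    rw [abs_of_nonneg (sub_nonneg.2 (hSmono hvu))] at h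
    nlinarith [hSlip v u hvu]
  refine ⟨fun v => c * D * lam ^ 2 + |w (S v)| * D ^ 2 * lam, fun v u hvu => ?_⟩
  have hS0 : 0 ≤ S u - S v := sub_nonneg.2 (hSmono hvu)
  have hSg : S u - S v ≤ (g v + D * lam * (u - v)) * (u - v) :=
    sub_le_mul_sub_of_hasDerivAt_le hS hvu fun t ht =>
      (hgdist v t ht.1).trans (by have := ht.2; gcongr)
  have hwu : |w (S u) - w (S v)| ≤ c * (lam * (u - v)) :=
    (hw _ _).trans (by rw [abs_of_nonneg hS0]; gcongr; exact hSlip v u hvu)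
  have hgu : |g u - g v| ≤ D * ((g v + D * lam * (u - v)) * (u - v)) :=
    (hgD u v).trans (by rw [abs_of_nonneg hS0]; gcongr)
  calc |w (S u) * g u - w (S v) * g v|
      = |(w (S u) - w (S v)) * g u + w (S v) * (g u - g v)| := by ring_nf
    _ ≤ |w (S u) - w (S v)| * g u + |w (S v)| * |g u - g v| := by
        refine (abs_add_le _ _).trans ?_
        rw [abs_mul, abs_mul, abs_of_pos (hg0 u)]
    _ ≤ c * (lam * (u - v)) * (g v + D * lam * (u - v))
          + |w (S v)| * (D * ((g v + D * lam * (u - v)) * (u - v))) := by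
        gcongr
        · exact (hg0 u).le
        · exact hgdist v u hvu
    _ = _ := by ring

theorem hasSlopeBound_branchSum {w : ℝ → ℝ} {c : ℝ} (hc : 0 ≤ c)
    (hw : ∀ a b, |w a - w b| ≤ c * |a - b|) (d : ℕ) :
    HasSlopeBound (branchSum S g w d) fun x =>
      c * lam * branchSum S g (fun _ => 1) d x + D * branchSum S g (fun y => |w y|) d x := by
  refine (HasSlopeBound.sum (Finset.range d) fun i =>
    (hasSlopeBound_comp_mul hS hg0 hgl hgD hD hc hw).comp_add_const (i : ℝ)).mono fun x => ?_
  simp only [branchSum, Finset.mul_sum, ← Finset.sum_add_distrib]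
  exact le_of_eq (Finset.sum_congr rfl fun i _ => by ring)

variable {d : ℕ} (hSd : ∀ u, S (u + d) = S u + 1) (hg : Continuous g)
include hSd hg

theorem branchSum_one_le (x : ℝ) : branchSum S g (fun _ => 1) d x ≤ 1 + D := by
  have hslope : HasSlopeBound (branchSum S g (fun _ => 1) d) fun x =>
      D * branchSum S g (fun _ => 1) d x := by
    simpa using hasSlopeBound_branchSum hS hg0 hgl hgD hD le_rfl
      (w := fun _ => (1 : ℝ)) (by simp) d
  simpa [intervalIntegral.integral_const_mul, integral_branchSum hS hSd hg continuous_const]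
    using hslope.le_integral_add_integral (continuous_branchSum hS hg continuous_const d)
      (continuous_const.mul (continuous_branchSum hS hg continuous_const d))
      (fun t => mul_nonneg hD (branchSum_nonneg (fun u => (hg0 u).le) (fun _ => zero_le_one) d t))
      x

theorem branchSum_abs_le {f : ℝ → ℝ} {c : ℝ} (hc : 0 ≤ c)
    (hf : ∀ a b, |f a - f b| ≤ c * |a - b|) (hfper : Function.Periodic f 1) (x : ℝ) :
    branchSum S g (fun y => |f y|) d x ≤ (1 + D) * (∫ t in (0 : ℝ)..1, |f t|) + c * lam := by
  have hfc : Continuous f :=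
    (LipschitzWith.of_dist_le' fun a b => by simpa only [Real.dist_eq] using hf a b).continuous
  have hlam : 0 ≤ lam := (hg0 0).le.trans (hgl 0)
  set G := branchSum S g (fun _ => 1) d
  set H := branchSum S g (fun y => |f y|) d
  have hGc : Continuous G := continuous_branchSum hS hg continuous_const d
  have hHc : Continuous H := continuous_branchSum hS hg (by fun_prop) d
  have hφ : Continuous fun t => c * lam * G t + D * H t := by fun_prop
  have hslope : HasSlopeBound H fun t => c * lam * G t + D * H t := by
    simpa only [abs_abs] using hasSlopeBound_branchSum hS hg0 hgl hgD hD hc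
      (fun a b => (abs_abs_sub_abs_le_abs_sub _ _).trans (hf a b)) d
  have hint : ∀ x, ∫ t in x..x + 1, H t = ∫ t in (0 : ℝ)..1, |f t| := fun x => by
    have habs : Function.Periodic (fun y => |f y|) 1 := fun y => by simp only [hfper y]
    rw [integral_branchSum hS hSd hg (by fun_prop), habs.intervalIntegral_add_eq (S x) 0,
      zero_add]
  have h := hslope.le_integral_add_integral hHc hφ (fun t => add_nonneg
    (mul_nonneg (mul_nonneg hc hlam) (branchSum_nonneg (fun u => (hg0 u).le)
      (fun _ => zero_le_one) d t))
    (mul_nonneg hD (branchSum_nonneg (fun u => (hg0 u).le) (fun _ => abs_nonneg _) d t))) x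
  rw [intervalIntegral.integral_add (f := fun t => c * lam * G t) (g := fun t => D * H t)
      ((continuous_const.mul hGc).intervalIntegrable _ _)
      ((continuous_const.mul hHc).intervalIntegrable _ _),
    intervalIntegral.integral_const_mul, intervalIntegral.integral_const_mul, hint,
    integral_branchSum hS hSd hg continuous_const] at h
  simp only [intervalIntegral.integral_const, smul_eq_mul] at h
  linarith

theorem lipConst_branchSum_le {f : ℝ → ℝ} (hfper : Function.Periodic f 1)
    (hfLip : ∃ c : ℝ, 0 ≤ c ∧ ∀ x y, |f x - f y| ≤ c * |x - y|) :
    lipConst (branchSum S g f d) ≤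
      (2 * D + 1) * lam * lipConst f + D * (D + 1) * ∫ x in (0 : ℝ)..1, |f x| := by
  have hf := abs_sub_le_lipConst_mul hfLip
  have hc := lipConst_nonneg f
  have hslope := (hasSlopeBound_branchSum hS hg0 hgl hgD hD hc hf d).mono
    (ψ := fun _ => (2 * D + 1) * lam * lipConst f + D * (D + 1) * ∫ x in (0 : ℝ)..1, |f x|)
    fun x => by
      have hlam : 0 ≤ lam := (hg0 0).le.trans (hgl 0)
      have hG := branchSum_one_le hS hg0 hgl hgD hD hSd hg x
      have hH := branchSum_abs_le hS hg0 hgl hgD hD hSd hg hc hf hfper x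
      nlinarith [mul_le_mul_of_nonneg_left hG (mul_nonneg hc hlam),
        mul_le_mul_of_nonneg_left hH hD]
  have hfc : Continuous f :=
    (LipschitzWith.of_dist_le' fun a b => by simpa only [Real.dist_eq] using hf a b).continuous
  refine lipConst_le_of_forall_le fun v u hvu => ?_
  have h := hslope.abs_sub_le_integral (continuous_branchSum hS hg hfc d) continuous_const hvu
  rwa [intervalIntegral.integral_const, smul_eq_mul, mul_comm] at h

end InverseBranch

theorem abs_inv_deriv_sub_le {T : ℝ → ℝ} (hT : ContDiff ℝ 2 T) (hT' : ∀ x, deriv T x ≠ 0)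
    {D : ℝ} (hdist : ∀ x, |deriv (deriv T) x / deriv T x ^ 2| ≤ D) (a b : ℝ) :
    |(deriv T a)⁻¹ - (deriv T b)⁻¹| ≤ D * |a - b| := by
  have hT'd : Differentiable ℝ (deriv T) :=
    (hT.iterate_deriv' 1 1).differentiable (by norm_num)
  have h := convex_univ.norm_image_sub_le_of_norm_hasDerivWithin_le (f := fun x => (deriv T x)⁻¹)
    (fun x _ => (((hT'd x).hasDerivAt).inv (hT' x)).hasDerivWithinAt)
    (fun x _ => by simpa only [Real.norm_eq_abs, neg_div, abs_neg] using hdist x)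
    (mem_univ b) (mem_univ a)
  simpa only [Real.norm_eq_abs] using h

theorem surjective_of_one_le_deriv {T : ℝ → ℝ} (hT : Differentiable ℝ T)
    (hT' : ∀ x, 1 ≤ deriv T x) : Function.Surjective T := by
  have hgrow : ∀ ⦃x y⦄, x ≤ y → y - x ≤ T y - T x := by
    simpa using mul_sub_le_image_sub_of_le_deriv hT hT'
  refine hT.continuous.surjective ?_ ?_
  · refine tendsto_atTop_mono' _ ((eventually_ge_atTop 0).mono fun x hx => ?_)
      (tendsto_atTop_add_const_left _ (T 0) tendsto_id)
    change T 0 + x ≤ T x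
    linarith [hgrow hx]
  · refine tendsto_atBot_mono' _ ((eventually_le_atBot 0).mono fun x hx => ?_)
      (tendsto_atBot_add_const_left _ (T 0) tendsto_id)
    change T x ≤ T 0 + x
    linarith [hgrow hx]

/-- The fibre `T⁻¹(x)` of the circle map is represented by the points of `[0, 1)` that the lift
`T` sends into `x + ℤ`. -/
noncomputable def transferOp (T f : ℝ → ℝ) (x : ℝ) : ℝ :=
  ∑ᶠ y ∈ {y : ℝ | y ∈ Ico (0 : ℝ) 1 ∧ ∃ n : ℤ, T y = x + n}, f y / |deriv T y|

section OrderIsoLift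

variable (E : ℝ ≃o ℝ) {d : ℕ}

theorem setOf_mem_Ico_and_eq_add_intCast (hE1 : E 1 = E 0 + d) (x : ℝ) :
    {y : ℝ | y ∈ Ico (0 : ℝ) 1 ∧ ∃ n : ℤ, E y = x + n}
      = (fun i : ℕ => E.symm (x + ⌈E 0 - x⌉ + i)) '' (Finset.range d : Set ℕ) := by
  set n₀ := ⌈E 0 - x⌉
  have hn₀ : E 0 - x ≤ n₀ := Int.le_ceil _
  have hn₀' : (n₀ : ℝ) < E 0 - x + 1 := Int.ceil_lt_add_one _
  ext y
  simp only [mem_ofPred_eq, mem_Ico, Finset.coe_range, mem_image, mem_Iio]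
  constructor
  · rintro ⟨⟨hy0, hy1⟩, n, hn⟩
    have h0 : E 0 ≤ x + n := hn ▸ E.monotone hy0
    have h1 : x + n < E 0 + d := hn ▸ hE1 ▸ E.strictMono hy1
    have hlo : n₀ ≤ n := Int.ceil_le.2 (by linarith)
    have hhi : n < n₀ + d := by
      have : (n : ℝ) < n₀ + d := by linarith
      exact_mod_cast this
    refine ⟨(n - n₀).toNat, by omega, ?_⟩
    rw [E.symm_apply_eq, hn]
    have hcast : (((n - n₀).toNat : ℤ) : ℝ) = n - n₀ := by
      rw [Int.toNat_of_nonneg (sub_nonneg.2 hlo), Int.cast_sub]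
    rw [← Int.cast_natCast, hcast]
    ring
  · rintro ⟨i, hi, rfl⟩
    have hi' : (i : ℝ) + 1 ≤ d := by exact_mod_cast hi
    refine ⟨⟨?_, ?_⟩, n₀ + i, by simp [add_assoc]⟩
    · rw [← E.symm_apply_apply 0]
      exact E.symm.monotone (by linarith [(Nat.cast_nonneg i : (0 : ℝ) ≤ i)])
    · rw [← E.symm_apply_apply 1]
      exact E.symm.strictMono (by rw [hE1]; linarith)

theorem hasDerivAt_orderIso_symm (hE : Differentiable ℝ E) (hE' : ∀ x, deriv E x ≠ 0) (u : ℝ) :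
    HasDerivAt E.symm (deriv E (E.symm u))⁻¹ u :=
  .of_local_left_inverse E.symm.continuous.continuousAt (hE _).hasDerivAt (hE' _)
    (.of_forall E.apply_symm_apply)

theorem orderIso_symm_add_natCast (hEd : ∀ x, E (x + 1) = E x + d) (u : ℝ) :
    E.symm (u + d) = E.symm u + 1 := by
  rw [E.symm_apply_eq, hEd, E.apply_symm_apply]

theorem transferOp_eq_branchSum (hEd : ∀ x, E (x + 1) = E x + d) (hE : Differentiable ℝ E)
    (hE' : ∀ x, 0 < deriv E x) {f : ℝ → ℝ} (hf : Function.Periodic f 1) :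
    transferOp E f = branchSum E.symm (fun u => (deriv E (E.symm u))⁻¹) f d := by
  funext x
  have hinj : Function.Injective fun i : ℕ => E.symm (x + ⌈E 0 - x⌉ + i) :=
    E.symm.injective.comp ((add_right_injective _).comp Nat.cast_injective)
  rw [transferOp, setOf_mem_Ico_and_eq_add_intCast E (by simpa using hEd 0),
    finsum_mem_image hinj.injOn, finsum_mem_coe_finset,
    ← (periodic_branchSum (hasDerivAt_orderIso_symm E hE fun x => (hE' x).ne')
      (orderIso_symm_add_natCast E hEd) hf).int_mul ⌈E 0 - x⌉ x, mul_one]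
  simp only [branchSum, abs_of_pos (hE' _), div_eq_mul_inv]

end OrderIsoLift

theorem lipConst_transferOp_le_of_one_lt_deriv (T : ℝ → ℝ) (d : ℤ)
    (hTlift : ∀ x, T (x + 1) = T x + d) (hTC2 : ContDiff ℝ 2 T) (hT' : ∀ x, 1 < deriv T x)
    {D : ℝ} (hTdist : ∀ x, |deriv (deriv T) x / (deriv T x) ^ 2| ≤ D)
    {lam : ℝ} (hlam : ∀ x, 1 / |deriv T x| ≤ lam) {f : ℝ → ℝ} (hfper : Function.Periodic f 1)
    (hfLip : ∃ c : ℝ, 0 ≤ c ∧ ∀ x y, |f x - f y| ≤ c * |x - y|) :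
    lipConst (transferOp T f) ≤
      (2 * D + 1) * lam * lipConst f + D * (D + 1) * ∫ x in (0 : ℝ)..1, |f x| := by
  have hTd : Differentiable ℝ T := hTC2.differentiable two_ne_zero
  have hT'pos : ∀ x, 0 < deriv T x := fun x => one_pos.trans (hT' x)
  obtain ⟨E, rfl⟩ : ∃ E : ℝ ≃o ℝ, ⇑E = T :=
    ⟨StrictMono.orderIsoOfSurjective T (strictMono_of_deriv_pos hT'pos)
      (surjective_of_one_le_deriv hTd fun x => (hT' x).le), rfl⟩
  lift d to ℕ using by
    have h := E.strictMono (zero_lt_one' ℝ)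
    rw [← zero_add 1, hTlift 0] at h
    exact_mod_cast ((lt_add_iff_pos_right _).1 h).le
  rw [transferOp_eq_branchSum E hTlift hTd hT'pos hfper]
  exact lipConst_branchSum_le (hasDerivAt_orderIso_symm E hTd fun x => (hT'pos x).ne')
    (fun u => inv_pos.2 (hT'pos _))
    (fun u => by simpa [abs_of_pos (hT'pos _)] using hlam (E.symm u))
    (fun a b => abs_inv_deriv_sub_le hTC2 (fun x => (hT'pos x).ne') hTdist _ _)
    ((abs_nonneg _).trans (hTdist 0)) (orderIso_symm_add_natCast E hTlift)
    (((hTC2.continuous_deriv one_le_two).comp E.symm.continuous).inv₀ fun u => (hT'pos _).ne')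
    hfper hfLip

theorem transferOp_neg (T f : ℝ → ℝ) (x : ℝ) :
    transferOp (fun y => -T y) f x = transferOp T f (-x) := by
  unfold transferOp
  refine finsum_mem_congr (ext fun y => and_congr_right fun _ => ⟨?_, ?_⟩) fun y _ => by simp
  · rintro ⟨n, hn⟩
    exact ⟨-n, by push_cast; linarith⟩
  · rintro ⟨n, hn⟩
    exact ⟨-n, by push_cast; linarith⟩

theorem forall_one_lt_or_forall_lt_neg_one {h : ℝ → ℝ} (hc : Continuous h)
    (h1 : ∀ x, 1 < |h x|) : (∀ x, 1 < h x) ∨ ∀ x, h x < -1 := by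
  by_contra! hcon
  obtain ⟨⟨a, ha⟩, ⟨b, hb⟩⟩ := hcon
  obtain ⟨z, hz⟩ := mem_range_of_exists_le_of_exists_ge (c := 0) hc
    ⟨a, by rcases lt_abs.1 (h1 a) with h | h <;> linarith⟩
    ⟨b, by rcases lt_abs.1 (h1 b) with h | h <;> linarith⟩
  have := h1 z
  rw [hz, abs_zero] at this
  linarith

theorem lip_L1_lasota_yorke_circle_general
    (T : ℝ → ℝ) (d : ℤ)
    (hTlift : ∀ x, T (x + 1) = T x + d)
    (hTC2 : ContDiff ℝ 2 T)
    (hTexp : ∀ x, 1 < |deriv T x|)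
    (D : ℝ)
    (hTdist : ∀ x, |deriv (deriv T) x / (deriv T x) ^ 2| ≤ D)
    (lam : ℝ) (hlam : lam = ⨆ x : ℝ, 1 / |deriv T x|)
    (L : (ℝ → ℝ) → ℝ → ℝ)
    (hL : ∀ f x, L f x =
      ∑ᶠ y ∈ {y : ℝ | y ∈ Ico (0 : ℝ) 1 ∧ ∃ n : ℤ, T y = x + n}, f y / |deriv T y|)
    (f : ℝ → ℝ)
    (hfper : Function.Periodic f 1)
    (hfLip : ∃ c : ℝ, 0 ≤ c ∧ ∀ x y, |f x - f y| ≤ c * |x - y|) :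
    lipConst (L f) ≤
      (2 * D + 1) * lam * lipConst f + D * (D + 1) * ∫ x in Ico (0 : ℝ) 1, |f x| := by
  have hbdd : BddAbove (range fun x => 1 / |deriv T x|) := ⟨1, by
    rintro _ ⟨y, rfl⟩
    exact (div_le_one (one_pos.trans (hTexp y))).2 (hTexp y).le⟩
  have hlam' : ∀ x, 1 / |deriv T x| ≤ lam := fun x => hlam ▸ le_ciSup hbdd x
  have hL' : L f = transferOp T f := funext (hL f)
  rw [hL', integral_Ico_eq_integral_Ioc, ← intervalIntegral.integral_of_le zero_le_one]
  rcases forall_one_lt_or_forall_lt_neg_one (hTC2.continuous_deriv one_le_two) hTexp with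
    hinc | hdec
  · exact lipConst_transferOp_le_of_one_lt_deriv T d hTlift hTC2 hinc hTdist hlam' hfper hfLip
  · rw [← lipConst_comp_neg, ← funext (transferOp_neg T f)]
    refine lipConst_transferOp_le_of_one_lt_deriv (fun y => -T y) (-d) (fun x => ?_) hTC2.neg
      (fun x => ?_) (fun x => ?_) (fun x => ?_) hfper hfLip
    · rw [hTlift]
      push_cast
      ring
    · simpa using (neg_lt_neg (hdec x))
    · simpa [neg_div] using hTdist x
    · simpa using hlam' x

/-- Lip–L¹ Lasota–Yorke inequality for a `C²` expanding map `T` of the circle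
`ℝ/ℤ` (represented by a lift `T : ℝ → ℝ` with `T (x+1) = T x + d`), with
`|T'| > 1`, distortion `|T''/(T')²| ≤ D` and `λ = sup_x 1/|T'(x)|`:
for every Lipschitz (1-periodic) `f`,
`Lip(L f) ≤ (2D+1) λ Lip(f) + D(D+1) ‖f‖_{L¹}`, where
`(L f)(x) = Σ_{y : T(y) = x mod 1, y ∈ [0,1)} f(y)/|T'(y)|` is the transfer
operator (a finite sum since `T` is an expanding covering map). -/
theorem lip_L1_lasota_yorke_circle
    (T : ℝ → ℝ) (d : ℤ)
    (hTlift : ∀ x, T (x + 1) = T x + d)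
    (hTC2 : ContDiff ℝ 2 T)
    (hTexp : ∀ x, 1 < |deriv T x|)
    (D : ℝ)
    (hTdist : ∀ x, |deriv (deriv T) x / (deriv T x) ^ 2| ≤ D)
    (lam : ℝ) (hlam : lam = ⨆ x : ℝ, 1 / |deriv T x|)
    (hfin : ∀ x : ℝ, {y : ℝ | y ∈ Ico (0 : ℝ) 1 ∧ ∃ n : ℤ, T y = x + n}.Finite)
    (L : (ℝ → ℝ) → ℝ → ℝ)
    (hL : ∀ f x, L f x =
      ∑ᶠ y ∈ {y : ℝ | y ∈ Ico (0 : ℝ) 1 ∧ ∃ n : ℤ, T y = x + n}, f y / |deriv T y|)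
    (f : ℝ → ℝ)
    (hfper : Function.Periodic f 1)
    (hfLip : ∃ c : ℝ, 0 ≤ c ∧ ∀ x y, |f x - f y| ≤ c * |x - y|) :
    lipConst (L f) ≤
      (2 * D + 1) * lam * lipConst f + D * (D + 1) * ∫ x in Ico (0 : ℝ) 1, |f x| :=
  lip_L1_lasota_yorke_circle_general T d hTlift hTC2 hTexp D hTdist lam hlam L hL f hfper hfLip
end

section
/- Let n ≥ 1, h = 1/n, and I_j = [(j−1)h, jh) for j = 1, …, n. For an integrable f : [0,1) → ℝ of bounded variation, let P_h f be the piecewise constant function whose value on each I_j is the average (1/h)∫_{I_j} f dm (the Ulam projection). Then ∫_0^1 |P_h f − f| dm ≤ (h/2) · Var(f). -/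
/-!
On each cell `I_j` the error `P_h f - f` is the deviation of `f` from its mean `c`. If
`L ≤ f ≤ G` on a set of measure `ℓ`, convexity of `y ↦ |y - c|` on `[L, G]` bounds the mean
absolute deviation by `2ℓ(c - L)(G - c)/(G - L) ≤ ℓ(G - L)/2`. The oscillation `G - L` of `f`
on `I_j` is at most its variation there, and the variations over the consecutive cells add up to
at most `Var(f)`.
-/

open Set MeasureTheory

-- The chord of the convex function `y ↦ |y - c|` over `[L, G]` lies above it.
theorem mul_abs_sub_le_of_mem_Icc {L G y c : ℝ} (hy : y ∈ Icc L G) (hc : c ∈ Icc L G) :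
    (G - L) * |y - c| ≤ (G - y) * (c - L) + (y - L) * (G - c) := by
  obtain ⟨hLy, hyG⟩ := hy
  obtain ⟨hLc, hcG⟩ := hc
  rcases le_total c y with hcy | hyc
  · rw [abs_of_nonneg (sub_nonneg.2 hcy)]; nlinarith
  · rw [abs_of_nonpos (sub_nonpos.2 hyc)]; nlinarith

theorem integral_abs_sub_average_le {α : Type*} [MeasurableSpace α] {μ : Measure α}
    [IsFiniteMeasure μ] {g : α → ℝ} {L G : ℝ} (hg : Integrable g μ)
    (hgLG : ∀ᵐ x ∂μ, g x ∈ Icc L G) :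
    ∫ x, |g x - ⨍ y, g y ∂μ| ∂μ ≤ μ.real univ * (G - L) / 2 := by
  rcases eq_zero_or_neZero μ with rfl | _
  · simp
  set c := ⨍ y, g y ∂μ
  set ℓ := μ.real univ
  have hc : c ∈ Icc L G := (convex_Icc L G).average_mem isClosed_Icc hgLG hg
  have hmass : ∫ x, g x ∂μ = ℓ * c := (measure_smul_average μ g).symm
  have hchord : (G - L) * ∫ x, |g x - c| ∂μ ≤ 2 * ℓ * (c - L) * (G - c) :=
    calc (G - L) * ∫ x, |g x - c| ∂μ = ∫ x, (G - L) * |g x - c| ∂μ :=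
          (integral_const_mul _ _).symm
      _ ≤ ∫ x, ((G - g x) * (c - L) + (g x - L) * (G - c)) ∂μ :=
          integral_mono_ae (by fun_prop) (by fun_prop)
            (hgLG.mono fun x hx => mul_abs_sub_le_of_mem_Icc hx hc)
      _ = 2 * ℓ * (c - L) * (G - c) := by
          rw [integral_add (by fun_prop) (by fun_prop), integral_mul_const, integral_mul_const,
            integral_sub (by fun_prop) hg, integral_sub hg (by fun_prop), integral_const,
            integral_const, hmass, smul_eq_mul, smul_eq_mul]
          ring
  have hℓ : 0 ≤ ℓ := measureReal_nonneg
  rcases hc.1.trans hc.2 |>.eq_or_lt with rfl | hLG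
  · refine (integral_nonpos_of_ae (hgLG.mono fun x hx => ?_)).trans (by simp)
    simp [le_antisymm hx.2 hx.1, le_antisymm hc.2 hc.1]
  · nlinarith [mul_nonneg hℓ (sq_nonneg (G + L - 2 * c))]

theorem BoundedVariationOn.exists_forall_mem_Icc {α : Type*} [LinearOrder α] {f : α → ℝ}
    {s : Set α} (hf : BoundedVariationOn f s) :
    ∃ L, ∀ x ∈ s, f x ∈ Icc L (L + (eVariationOn f s).toReal) := by
  set V := (eVariationOn f s).toReal
  have hosc : ∀ x ∈ s, ∀ y ∈ s, f x - f y ≤ V := fun x hx y hy =>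
    calc f x - f y ≤ dist (f x) (f y) := le_abs_self _
      _ ≤ V := by
        rw [dist_edist]; exact ENNReal.toReal_mono hf (eVariationOn.edist_le f hx hy)
  rcases s.eq_empty_or_nonempty with rfl | ⟨x₀, hx₀⟩
  · simp
  refine ⟨sInf (f '' s), fun x hx => ⟨?_, ?_⟩⟩
  · exact csInf_le ⟨f x₀ - V, forall_mem_image.2 fun y hy => by linarith [hosc x₀ hx₀ y hy]⟩
      (mem_image_of_mem f hx)
  · have : f x - V ≤ sInf (f '' s) :=
      le_csInf ⟨f x₀, mem_image_of_mem f hx₀⟩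
        (forall_mem_image.2 fun y hy => by linarith [hosc x hx y hy])
    linarith

theorem eVariationOn.sum_Ico_le {α E : Type*} [LinearOrder α] [PseudoEMetricSpace E]
    (f : α → E) {u : ℕ → α} (hu : Monotone u) (n : ℕ) :
    ∑ k ∈ Finset.range n, eVariationOn f (Ico (u k) (u (k + 1)))
      ≤ eVariationOn f (Ico (u 0) (u n)) := by
  induction n with
  | zero => simp
  | succ n ih =>
    calc ∑ k ∈ Finset.range (n + 1), eVariationOn f (Ico (u k) (u (k + 1)))
        ≤ eVariationOn f (Ico (u 0) (u n)) + eVariationOn f (Ico (u n) (u (n + 1))) := by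
          rw [Finset.sum_range_succ]; gcongr
      _ ≤ eVariationOn f (Ico (u 0) (u n) ∪ Ico (u n) (u (n + 1))) :=
          eVariationOn.add_le_union f fun x hx y hy => hx.2.le.trans hy.1
      _ = eVariationOn f (Ico (u 0) (u (n + 1))) := by
          rw [Ico_union_Ico_eq_Ico (hu n.zero_le) (hu n.le_succ)]

theorem sum_setIntegral_Ico_eq {E : Type*} [NormedAddCommGroup E] [NormedSpace ℝ E]
    {μ : Measure ℝ} [NullSingletonClass μ] {g : ℝ → E} {u : ℕ → ℝ} (hu : Monotone u) {n : ℕ}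
    (hg : ∀ k < n, IntegrableOn g (Ico (u k) (u (k + 1))) μ) :
    ∑ k ∈ Finset.range n, ∫ x in Ico (u k) (u (k + 1)), g x ∂μ
      = ∫ x in Ico (u 0) (u n), g x ∂μ := by
  have hIco {a b : ℝ} (hab : a ≤ b) : ∫ x in Ico a b, g x ∂μ = ∫ x in a..b, g x ∂μ := by
    rw [integral_Ico_eq_integral_Ioc, intervalIntegral.integral_of_le hab]
  rw [hIco (hu n.zero_le), ← intervalIntegral.sum_integral_adjacent_intervals fun k hk =>
    (intervalIntegrable_iff_integrableOn_Ico_of_le (hu k.le_succ)).2 (hg k hk)]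
  exact Finset.sum_congr rfl fun k _ => hIco (hu k.le_succ)

theorem integral_abs_setAverage_sub_le {f : ℝ → ℝ} {a b : ℝ} (hab : a ≤ b)
    (hf : BoundedVariationOn f (Ico a b)) (hfi : IntegrableOn f (Ico a b)) :
    ∫ x in Ico a b, |(⨍ t in Ico a b, f t) - f x|
      ≤ (b - a) / 2 * (eVariationOn f (Ico a b)).toReal := by
  obtain ⟨L, hL⟩ := hf.exists_forall_mem_Icc
  have := integral_abs_sub_average_le hfi (ae_restrict_of_forall_mem measurableSet_Ico hL)
  rw [measureReal_restrict_apply_univ, Real.volume_real_Ico_of_le hab] at this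
  simp_rw [abs_sub_comm _ (f _)]
  linarith

theorem integral_abs_sub_le_of_eqOn_setAverage {f P : ℝ → ℝ} {u : ℕ → ℝ} (hu : Monotone u)
    {n : ℕ} {h : ℝ} (hmesh : ∀ j < n, u (j + 1) - u j ≤ h)
    (hf : BoundedVariationOn f (Ico (u 0) (u n))) (hfi : IntegrableOn f (Ico (u 0) (u n)))
    (hP : ∀ j < n, EqOn P (fun _ => ⨍ t in Ico (u j) (u (j + 1)), f t) (Ico (u j) (u (j + 1)))) :
    ∫ x in Ico (u 0) (u n), |P x - f x| ≤ h / 2 * (eVariationOn f (Ico (u 0) (u n))).toReal := by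
  rcases n.eq_zero_or_pos with rfl | hn
  · simp
  have hh : 0 ≤ h := (sub_nonneg.2 (hu (Nat.zero_le 1))).trans (hmesh 0 hn)
  have hcell (j : ℕ) (hj : j < n) : Ico (u j) (u (j + 1)) ⊆ Ico (u 0) (u n) :=
    Ico_subset_Ico (hu j.zero_le) (hu hj)
  calc ∫ x in Ico (u 0) (u n), |P x - f x|
      = ∑ j ∈ Finset.range n, ∫ x in Ico (u j) (u (j + 1)), |P x - f x| := by
        refine (sum_setIntegral_Ico_eq hu fun j hj => ?_).symm
        refine IntegrableOn.congr_fun ((integrable_const (⨍ t in Ico (u j) (u (j + 1)), f t)).sub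
          (hfi.mono_set (hcell j hj))).abs (fun x hx => ?_) measurableSet_Ico
        simp only [Pi.sub_apply, hP j hj hx]
    _ ≤ ∑ j ∈ Finset.range n, h / 2 * (eVariationOn f (Ico (u j) (u (j + 1)))).toReal := by
        refine Finset.sum_le_sum fun j hj => ?_
        have hj := Finset.mem_range.1 hj
        rw [setIntegral_congr_fun measurableSet_Ico fun x hx => by rw [hP j hj hx]]
        refine (integral_abs_setAverage_sub_le (hu j.le_succ) (hf.mono (hcell j hj))
          (hfi.mono_set (hcell j hj))).trans ?_
        gcongr
        exact hmesh j hj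
    _ ≤ h / 2 * (eVariationOn f (Ico (u 0) (u n))).toReal := by
        rw [← Finset.mul_sum, ← ENNReal.toReal_sum fun j hj =>
          hf.mono (hcell j (Finset.mem_range.1 hj))]
        gcongr
        exact eVariationOn.sum_Ico_le f hu n

/-- Ulam projection error: if `P` is the piecewise constant function whose value on
each interval `I_j = [(j-1)h, jh)` (`h = 1/n`) is the average of `f` on `I_j`, then
`∫_0^1 |P f - f| ≤ (h/2) Var(f)`. -/
theorem ulam_projection_error
    (n : ℕ) (hn : 1 ≤ n) (h : ℝ) (hh : h = 1 / n)
    (f : ℝ → ℝ)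
    (hfBV : BoundedVariationOn f (Ico 0 1))
    (hfInt : IntegrableOn f (Ico 0 1))
    (P : ℝ → ℝ)
    (hP : ∀ j, j < n → ∀ x ∈ Ico ((j : ℝ) * h) (((j : ℝ) + 1) * h),
      P x = (1 / h) * ∫ t in Ico ((j : ℝ) * h) (((j : ℝ) + 1) * h), f t) :
    ∫ x in Ico (0 : ℝ) 1, |P x - f x| ≤ h / 2 * (eVariationOn f (Ico 0 1)).toReal := by
  have hn₀ : (0 : ℝ) < n := Nat.cast_pos.2 hn
  have hh₀ : 0 < h := hh ▸ one_div_pos.2 hn₀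
  set u : ℕ → ℝ := fun j => j * h
  have hu : Monotone u := fun i j hij => mul_le_mul_of_nonneg_right (Nat.cast_le.2 hij) hh₀.le
  have hu₀ : u 0 = 0 := by simp only [u, Nat.cast_zero, zero_mul]
  have hun : u n = 1 := by simp only [u, hh]; field_simp
  have hstep (j : ℕ) : u (j + 1) - u j = h := by simp only [u]; push_cast; ring
  have hPavg (j : ℕ) (hj : j < n) :
      EqOn P (fun _ => ⨍ t in Ico (u j) (u (j + 1)), f t) (Ico (u j) (u (j + 1))) := by
    intro x hx
    rw [setAverage_eq, Real.volume_real_Ico_of_le (hu j.le_succ), hstep, smul_eq_mul, ← one_div]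
    simp only [u] at hx ⊢; push_cast at hx ⊢
    exact hP j hj x hx
  rw [← hu₀, ← hun] at hfBV hfInt ⊢
  exact integral_abs_sub_le_of_eqOn_setAverage hu (fun j _ => (hstep j).le) hfBV hfInt hPavg
end
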